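/- arXiv:2212.03340 — 7 statements merged into one kernel-verified Lean document; each statement's English description precedes it below -/
import Mathlib

section
/- Let ψ be a belief function satisfying: ψ is measurable and nonnegative; the set {(p_X, p_Y) : ψ(p_X, p_Y) > 0} is open and ψ is continuously differentiable on it; ψ is integrable over every sector {(p_X, p_Y) ∈ (0,∞)² : p₁ ≤ p_X/p_Y ≤ p₂} with 0 < p₁ < p₂ < ∞; the total integral N_ψ = ∬_{(0,∞)²} ψ dp_X dp_Y is finite and positive; and there exists at least one feasible triple (L, X₀, Y₀) with I_ψ(L) < ∞. Then the infimum of I_ψ over all feasible triples is attained: there exists a feasible triple (L*, X₀*, Y₀*) such that I_ψ(L*) ≤ I_ψ(L) for every feasible triple (L, X₀, Y₀). -/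
open MeasureTheory Set
open scoped ENNReal

noncomputable section

/-- The open positive orthant of `ℝ²`, on which prices live. -/
def orth : Set (ℝ × ℝ) := Set.Ioi 0 ×ˢ Set.Ioi 0

/-- The expected CFMM inefficiency `I_ψ(L) = ∬ ψ(p_X,p_Y) / (p_Y·L(p_X/p_Y)) dp_X dp_Y`,
a Lebesgue integral valued in `[0,∞]`; `ENNReal` division encodes the conventions
`c/0 = ∞` for `c > 0` and `0/0 = 0`. -/
def Ineff (ψ : ℝ × ℝ → ℝ) (L : ℝ → ℝ) : ℝ≥0∞ :=
  ∫⁻ q in orth, ENNReal.ofReal (ψ q) / ENNReal.ofReal (q.2 * L (q.1 / q.2))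

/-- Feasibility of a triple `(L, X₀, Y₀)` of a liquidity allocation and initial reserves,
for reference prices `P_X, P_Y` (so `p₀ = P_X / P_Y`) and budget `B`. -/
def Feasible (PX PY B : ℝ) (L : ℝ → ℝ) (X0 Y0 : ℝ) : Prop :=
  Measurable L ∧ (∀ p ∈ Set.Ioi (0:ℝ), 0 ≤ L p) ∧ 0 ≤ X0 ∧ 0 ≤ Y0 ∧
  (∫⁻ p in Set.Ioc (0:ℝ) (PX / PY), ENNReal.ofReal (L p / p)) ≤ ENNReal.ofReal Y0 ∧
  (∫⁻ p in Set.Ioi (PX / PY), ENNReal.ofReal (L p / p ^ 2)) ≤ ENNReal.ofReal X0 ∧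
  PX * X0 + PY * Y0 ≤ B

/-- A feasible triple is optimal for the belief `ψ` if it minimizes the expected CFMM
inefficiency over all feasible triples. -/
def IsOptimal (PX PY B : ℝ) (ψ : ℝ × ℝ → ℝ) (L : ℝ → ℝ) (X0 Y0 : ℝ) : Prop :=
  Feasible PX PY B L X0 Y0 ∧
  ∀ L' X0' Y0', Feasible PX PY B L' X0' Y0' → Ineff ψ L ≤ Ineff ψ L'

/-!
In ratio coordinates `p_X = u v`, `p_Y = v` the inefficiency becomes `∫ φ(u) / L(u) du`, where
`φ(u) = ∫ ψ(u v, v) dv` is the belief mass on the ray of price ratio `u`, and the reserve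
constraints collapse to the single budget `∫ L w ≤ B`, with `w(p) = P_Y / p` for `p ≤ p₀` and
`w(p) = P_X / p²` beyond. Cauchy–Schwarz gives `(∫ √(φ w))² ≤ (∫ φ / L) (∫ L w) ≤ B ∫ φ / L`,
with equality for `L* = (B / ∫ √(φ w)) √(φ / w)`, which is therefore optimal.
-/

namespace ENNReal

lemma div_mul_cancel_of_div_ne_top {a b : ℝ≥0∞} (hb : b ≠ ⊤) (h : a / b ≠ ⊤) : a / b * b = a := by
  rcases eq_or_ne b 0 with rfl | hb0
  · rw [mul_zero, eq_comm]
    by_contra ha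
    exact h (ENNReal.div_zero ha)
  · exact ENNReal.div_mul_cancel hb0 hb

lemma mul_self_rpow_half (a : ℝ≥0∞) : (a * a) ^ (2⁻¹ : ℝ) = a := by
  rw [← sq, ← rpow_natCast, ← rpow_mul]; norm_num

lemma div_rpow_half_mul {a b : ℝ≥0∞} (hb0 : b ≠ 0) (hb : b ≠ ⊤) :
    (a / b) ^ (2⁻¹ : ℝ) * b = (a * b) ^ (2⁻¹ : ℝ) := by
  calc (a / b) ^ (2⁻¹ : ℝ) * b = (a / b * (b * b)) ^ (2⁻¹ : ℝ) := by
        rw [mul_rpow_of_nonneg _ _ (by norm_num), mul_self_rpow_half]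
    _ = (a * b) ^ (2⁻¹ : ℝ) := by rw [← mul_assoc, ENNReal.div_mul_cancel hb0 hb]

lemma div_mul_rpow_half_div_le {a b : ℝ≥0∞} (c : ℝ≥0∞) (hb0 : b ≠ 0) (hb : b ≠ ⊤) :
    a / (c * (a / b) ^ (2⁻¹ : ℝ)) ≤ c⁻¹ * (a * b) ^ (2⁻¹ : ℝ) := by
  rcases eq_or_ne a 0 with rfl | ha0
  · simp
  rcases eq_or_ne a ⊤ with rfl | ha
  · rcases eq_or_ne c 0 with rfl | hc0
    · simp [top_mul hb0]
    · simp [top_div_of_ne_top hb, mul_top hc0]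
  have hx0 : (a / b) ^ (2⁻¹ : ℝ) ≠ 0 := by simp [ha0, hb]
  have hx : (a / b) ^ (2⁻¹ : ℝ) ≠ ⊤ := by simp [div_eq_top, ha, hb0]
  have hsq : (a / b) ^ (2⁻¹ : ℝ) * (a * b) ^ (2⁻¹ : ℝ) = a := by
    rw [← mul_rpow_of_nonneg _ _ (by norm_num), mul_comm a b, ← mul_assoc,
      ENNReal.div_mul_cancel hb0 hb, mul_self_rpow_half]
  rw [div_eq_mul_inv, ENNReal.mul_inv (Or.inr hx) (Or.inr hx0), ← mul_assoc, mul_comm a,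
    mul_assoc, ← div_eq_mul_inv, ← (ENNReal.eq_div_iff hx0 hx).2 hsq]

end ENNReal

section WeightedReciprocal

open ENNReal

variable {α : Type*} [MeasurableSpace α] {μ : Measure α} {φ w ℓ : α → ℝ≥0∞}

theorem sq_lintegral_rpow_half_le (hφ : AEMeasurable φ μ) (hw : AEMeasurable w μ)
    (hℓ : AEMeasurable ℓ μ) (hℓtop : ∀ᵐ x ∂μ, ℓ x ≠ ⊤) (hJ : ∫⁻ x, φ x / ℓ x ∂μ ≠ ⊤) :
    (∫⁻ x, (φ x * w x) ^ (2⁻¹ : ℝ) ∂μ) ^ 2 ≤ (∫⁻ x, φ x / ℓ x ∂μ) * ∫⁻ x, ℓ x * w x ∂μ := by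
  have hsplit : ∀ᵐ x ∂μ,
      (φ x * w x) ^ (2⁻¹ : ℝ) = (φ x / ℓ x) ^ (2⁻¹ : ℝ) * (ℓ x * w x) ^ (2⁻¹ : ℝ) := by
    filter_upwards [hℓtop, (ae_lt_top' (hφ.div hℓ) hJ)] with x hx hJx
    rw [← mul_rpow_of_nonneg _ _ (by norm_num), ← mul_assoc,
      div_mul_cancel_of_div_ne_top hx hJx.ne]
  have hhalf : (2⁻¹ : ℝ) + 2⁻¹ = 1 := by norm_num
  calc (∫⁻ x, (φ x * w x) ^ (2⁻¹ : ℝ) ∂μ) ^ 2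
      ≤ ((∫⁻ x, φ x / ℓ x ∂μ) ^ (2⁻¹ : ℝ) * (∫⁻ x, ℓ x * w x ∂μ) ^ (2⁻¹ : ℝ)) ^ 2 := by
        rw [lintegral_congr_ae hsplit]
        gcongr
        exact lintegral_mul_norm_pow_le (hφ.div hℓ) (hℓ.mul hw) (by norm_num) (by norm_num) hhalf
    _ = (∫⁻ x, φ x / ℓ x ∂μ) * ∫⁻ x, ℓ x * w x ∂μ := by
        rw [mul_pow, ← rpow_natCast, ← rpow_natCast, ← rpow_mul, ← rpow_mul]
        norm_num

theorem exists_forall_lintegral_div_le (hφ : Measurable φ) (hw : Measurable w)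
    (hw0 : ∀ᵐ x ∂μ, w x ≠ 0) (hwtop : ∀ᵐ x ∂μ, w x ≠ ⊤) {b : ℝ≥0∞} (hb0 : b ≠ 0) (hb : b ≠ ⊤) :
    ∃ ℓ', Measurable ℓ' ∧ (∀ᵐ x ∂μ, ℓ' x ≠ ⊤) ∧ ∫⁻ x, ℓ' x * w x ∂μ ≤ b ∧
      ∀ ℓ, AEMeasurable ℓ μ → (∀ᵐ x ∂μ, ℓ x ≠ ⊤) → ∫⁻ x, ℓ x * w x ∂μ ≤ b →
        ∫⁻ x, φ x / ℓ' x ∂μ ≤ ∫⁻ x, φ x / ℓ x ∂μ := by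
  set S := ∫⁻ x, (φ x * w x) ^ (2⁻¹ : ℝ) ∂μ
  have hS : Measurable fun x ↦ (φ x * w x) ^ (2⁻¹ : ℝ) := (hφ.mul hw).pow_const _
  -- The equality case of Cauchy–Schwarz, scaled to exhaust the budget. No case split on
  -- `S ∈ {0, ⊤}` is needed: `b / S` is then `⊤` or `0`, and both bounds below survive.
  set ℓ' := fun x ↦ b / S * (φ x / w x) ^ (2⁻¹ : ℝ)
  have hℓ' : Measurable ℓ' := measurable_const.mul ((hφ.div hw).pow_const _)
  have hcost : ∫⁻ x, ℓ' x * w x ∂μ ≤ b := calc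
    ∫⁻ x, ℓ' x * w x ∂μ = ∫⁻ x, b / S * (φ x * w x) ^ (2⁻¹ : ℝ) ∂μ := by
        refine lintegral_congr_ae ?_
        filter_upwards [hw0, hwtop] with x hx0 hx
        rw [mul_assoc, div_rpow_half_mul hx0 hx]
    _ = b / S * S := lintegral_const_mul _ hS
    _ ≤ b := by rw [mul_comm]; exact mul_div_le
  have hineff : ∫⁻ x, φ x / ℓ' x ∂μ ≤ S ^ 2 / b := calc
    ∫⁻ x, φ x / ℓ' x ∂μ ≤ ∫⁻ x, (b / S)⁻¹ * (φ x * w x) ^ (2⁻¹ : ℝ) ∂μ := by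
        refine lintegral_mono_ae ?_
        filter_upwards [hw0, hwtop] with x hx0 hx
        exact div_mul_rpow_half_div_le _ hx0 hx
    _ = S / b * S := by rw [lintegral_const_mul _ hS, ENNReal.inv_div (Or.inr hb) (Or.inr hb0)]
    _ = S ^ 2 / b := by rw [sq, div_eq_mul_inv, div_eq_mul_inv, mul_right_comm]
  refine ⟨ℓ', hℓ', ?_, hcost, fun ℓ hℓ hℓtop hℓbudget ↦ ?_⟩
  · filter_upwards [ae_lt_top (hℓ'.mul hw) (ne_top_of_le_ne_top hb hcost), hw0] with x hx hx0
    rintro hxtop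
    simp [hxtop, top_mul hx0] at hx
  · rcases eq_or_ne (∫⁻ x, φ x / ℓ x ∂μ) ⊤ with hJ | hJ
    · exact hJ ▸ le_top
    refine hineff.trans (div_le_of_le_mul ?_)
    calc S ^ 2 ≤ (∫⁻ x, φ x / ℓ x ∂μ) * ∫⁻ x, ℓ x * w x ∂μ :=
          sq_lintegral_rpow_half_le hφ.aemeasurable hw.aemeasurable hℓ hℓtop hJ
      _ ≤ (∫⁻ x, φ x / ℓ x ∂μ) * b := by gcongr

end WeightedReciprocal

section RatioCoordinates

theorem setLIntegral_orth_eq (F : ℝ × ℝ → ℝ≥0∞) (hF : Measurable F) :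
    ∫⁻ q in orth, F q
      = ∫⁻ u in Ioi 0, ∫⁻ v in Ioi 0, ENNReal.ofReal v * F (u * v, v) := by
  have hscale : ∀ v ∈ Ioi (0 : ℝ), ∫⁻ x in Ioi 0, F (x, v)
      = ∫⁻ u in Ioi 0, ENNReal.ofReal v * F (u * v, v) := fun v (hv : 0 < v) ↦ by
    have := lintegral_image_eq_lintegral_abs_deriv_mul (measurableSet_Ioi (a := 0))
      (fun _ _ ↦ (hasDerivAt_const_mul v).hasDerivWithinAt)
      (mul_right_injective₀ hv.ne').injOn (fun x ↦ F (x, v))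
    rw [image_const_mul_Ioi_zero hv, abs_of_pos hv] at this
    simpa only [mul_comm v] using this
  rw [orth, Measure.volume_eq_prod, ← Measure.prod_restrict, lintegral_prod_symm _ hF.aemeasurable,
    setLIntegral_congr_fun measurableSet_Ioi hscale, lintegral_lintegral_swap]
  fun_prop

def rayMass (ψ : ℝ × ℝ → ℝ) (u : ℝ) : ℝ≥0∞ :=
  ∫⁻ v in Ioi 0, ENNReal.ofReal (ψ (u * v, v))

theorem measurable_rayMass {ψ : ℝ × ℝ → ℝ} (hψ : Measurable ψ) : Measurable (rayMass ψ) :=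
  Measurable.lintegral_prod_right' (f := fun q : ℝ × ℝ ↦ ENNReal.ofReal (ψ (q.1 * q.2, q.2)))
    (by fun_prop)

theorem ineff_eq_setLIntegral_rayMass_div {ψ : ℝ × ℝ → ℝ} (hψ : Measurable ψ) {L : ℝ → ℝ}
    (hL : Measurable L) : Ineff ψ L = ∫⁻ u in Ioi 0, rayMass ψ u / ENNReal.ofReal (L u) := by
  rw [Ineff, setLIntegral_orth_eq _ (by fun_prop)]
  refine setLIntegral_congr_fun measurableSet_Ioi fun u _ ↦ ?_
  rw [rayMass, div_eq_mul_inv (∫⁻ _ in _, _),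
    ← lintegral_mul_const _ (by fun_prop : Measurable fun v ↦ ENNReal.ofReal (ψ (u * v, v)))]
  refine setLIntegral_congr_fun measurableSet_Ioi fun v (hv : 0 < v) ↦ ?_
  rw [mul_div_cancel_right₀ u hv.ne', ← div_eq_mul_inv, ← mul_div_assoc,
    ENNReal.ofReal_mul hv.le,
    ENNReal.mul_div_mul_left _ _ (by simpa using hv) ENNReal.ofReal_ne_top]

end RatioCoordinates

section Budget

variable {PX PY : ℝ}

def budgetWeight (PX PY p : ℝ) : ℝ≥0∞ :=
  ENNReal.ofReal (if p ≤ PX / PY then PY / p else PX / p ^ 2)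

theorem measurable_budgetWeight : Measurable (budgetWeight PX PY) :=
  (Measurable.ite (measurableSet_le measurable_id measurable_const)
    (measurable_const.div measurable_id)
    (measurable_const.div (measurable_id.pow_const 2))).ennreal_ofReal

theorem budgetWeight_ne_zero (hPX : 0 < PX) (hPY : 0 < PY) {p : ℝ} (hp : 0 < p) :
    budgetWeight PX PY p ≠ 0 := by
  rw [budgetWeight, ne_eq, ENNReal.ofReal_eq_zero, not_le]
  split_ifs <;> positivity

theorem setLIntegral_mul_budgetWeight (hPX : 0 ≤ PX) (hPY : 0 ≤ PY) (L : ℝ → ℝ) :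
    ∫⁻ p in Ioi 0, ENNReal.ofReal (L p) * budgetWeight PX PY p
      = ENNReal.ofReal PY * (∫⁻ p in Ioc 0 (PX / PY), ENNReal.ofReal (L p / p))
        + ENNReal.ofReal PX * ∫⁻ p in Ioi (PX / PY), ENNReal.ofReal (L p / p ^ 2) := by
  rw [← Ioc_union_Ioi_eq_Ioi (div_nonneg hPX hPY), lintegral_union measurableSet_Ioi
    Ioc_disjoint_Ioi_same, ← lintegral_const_mul' _ _ ENNReal.ofReal_ne_top,
    ← lintegral_const_mul' _ _ ENNReal.ofReal_ne_top]
  congr 1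
  · refine setLIntegral_congr_fun measurableSet_Ioc fun p ⟨hp, hpp⟩ ↦ ?_
    rw [budgetWeight, if_pos hpp, ← ENNReal.ofReal_mul' (div_nonneg hPY hp.le),
      ← ENNReal.ofReal_mul hPY, mul_div_left_comm]
  · refine setLIntegral_congr_fun measurableSet_Ioi fun p (hpp : PX / PY < p) ↦ ?_
    rw [budgetWeight, if_neg hpp.not_ge, ← ENNReal.ofReal_mul' (by positivity),
      ← ENNReal.ofReal_mul hPX, mul_div_left_comm]

theorem exists_feasible_iff (hPX : 0 < PX) (hPY : 0 < PY) {B : ℝ} (hB : 0 ≤ B) (L : ℝ → ℝ) :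
    (∃ X0 Y0, Feasible PX PY B L X0 Y0) ↔ Measurable L ∧ (∀ p ∈ Ioi (0 : ℝ), 0 ≤ L p) ∧
      ∫⁻ p in Ioi 0, ENNReal.ofReal (L p) * budgetWeight PX PY p ≤ ENNReal.ofReal B := by
  rw [setLIntegral_mul_budgetWeight hPX.le hPY.le]
  set IY := ∫⁻ p in Ioc 0 (PX / PY), ENNReal.ofReal (L p / p)
  set IX := ∫⁻ p in Ioi (PX / PY), ENNReal.ofReal (L p / p ^ 2)
  constructor
  · rintro ⟨X0, Y0, hL, hLnn, hX0, hY0, hIY, hIX, hbudget⟩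
    refine ⟨hL, hLnn, ?_⟩
    calc ENNReal.ofReal PY * IY + ENNReal.ofReal PX * IX
        ≤ ENNReal.ofReal PY * ENNReal.ofReal Y0 + ENNReal.ofReal PX * ENNReal.ofReal X0 := by
          gcongr
      _ = ENNReal.ofReal (PX * X0 + PY * Y0) := by
          rw [← ENNReal.ofReal_mul hPY.le, ← ENNReal.ofReal_mul hPX.le, add_comm,
            ENNReal.ofReal_add (by positivity) (by positivity)]
      _ ≤ ENNReal.ofReal B := ENNReal.ofReal_le_ofReal hbudget
  · rintro ⟨hL, hLnn, hbudget⟩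
    have hIY : IY ≠ ⊤ := fun h ↦ by
      simp [h, ENNReal.mul_top (ENNReal.ofReal_pos.2 hPY).ne'] at hbudget
    have hIX : IX ≠ ⊤ := fun h ↦ by
      simp [h, ENNReal.mul_top (ENNReal.ofReal_pos.2 hPX).ne'] at hbudget
    refine ⟨IX.toReal, IY.toReal, hL, hLnn, ENNReal.toReal_nonneg, ENNReal.toReal_nonneg,
      (ENNReal.ofReal_toReal hIY).ge, (ENNReal.ofReal_toReal hIX).ge, ?_⟩
    rw [← ENNReal.ofReal_le_ofReal_iff hB, ENNReal.ofReal_add (by positivity) (by positivity),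
      ENNReal.ofReal_mul hPX.le, ENNReal.ofReal_mul hPY.le, ENNReal.ofReal_toReal hIX,
      ENNReal.ofReal_toReal hIY, add_comm]
    exact hbudget

end Budget

theorem stmt_2_general (PX PY B : ℝ) (hPX : 0 < PX) (hPY : 0 < PY) (hB : 0 < B)
    (ψ : ℝ × ℝ → ℝ) (hmeas : Measurable ψ) :
    ∃ L X0 Y0, Feasible PX PY B L X0 Y0 ∧
      ∀ L' X0' Y0', Feasible PX PY B L' X0' Y0' → Ineff ψ L ≤ Ineff ψ L' := by
  obtain ⟨ℓ, hℓ, hℓtop, hℓbudget, hℓmin⟩ :=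
    exists_forall_lintegral_div_le (μ := volume.restrict (Ioi 0)) (measurable_rayMass hmeas)
      measurable_budgetWeight (ae_restrict_of_forall_mem measurableSet_Ioi fun _ hp ↦
        budgetWeight_ne_zero hPX hPY hp) (ae_of_all _ fun _ ↦ ENNReal.ofReal_ne_top)
      (ENNReal.ofReal_pos.2 hB).ne' ENNReal.ofReal_ne_top
  set L := fun p ↦ (ℓ p).toReal
  have hLℓ : ∀ᵐ p ∂volume.restrict (Ioi 0), ENNReal.ofReal (L p) = ℓ p :=
    hℓtop.mono fun _ ↦ ENNReal.ofReal_toReal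
  obtain ⟨X0, Y0, hF⟩ := (exists_feasible_iff hPX hPY hB.le L).2
    ⟨hℓ.ennreal_toReal, fun _ _ ↦ ENNReal.toReal_nonneg, by
      rwa [lintegral_congr_ae (hLℓ.mono fun p hp ↦ by rw [hp])]⟩
  refine ⟨L, X0, Y0, hF, fun L' X0' Y0' hF' ↦ ?_⟩
  obtain ⟨hL', -, hL'budget⟩ := (exists_feasible_iff hPX hPY hB.le L').1 ⟨X0', Y0', hF'⟩
  rw [ineff_eq_setLIntegral_rayMass_div hmeas hF.1, ineff_eq_setLIntegral_rayMass_div hmeas hL',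
    lintegral_congr_ae (hLℓ.mono fun p hp ↦ by rw [hp])]
  exact hℓmin _ hL'.ennreal_ofReal.aemeasurable (ae_of_all _ fun _ ↦ ENNReal.ofReal_ne_top)
    hL'budget

theorem stmt_2 (PX PY B : ℝ) (hPX : 0 < PX) (hPY : 0 < PY) (hB : 0 < B)
    (ψ : ℝ × ℝ → ℝ) (hmeas : Measurable ψ) (hnn : ∀ q, 0 ≤ ψ q)
    (hopen : IsOpen {q : ℝ × ℝ | 0 < ψ q})
    (hC1 : ContDiffOn ℝ 1 ψ {q : ℝ × ℝ | 0 < ψ q})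
    (hsector : ∀ p₁ p₂ : ℝ, 0 < p₁ → p₁ < p₂ →
      (∫⁻ q in {q : ℝ × ℝ | q ∈ orth ∧ p₁ ≤ q.1 / q.2 ∧ q.1 / q.2 ≤ p₂},
        ENNReal.ofReal (ψ q)) < ⊤)
    (hNpos : 0 < ∫⁻ q in orth, ENNReal.ofReal (ψ q))
    (hNfin : (∫⁻ q in orth, ENNReal.ofReal (ψ q)) < ⊤)
    (hfeas : ∃ L X0 Y0, Feasible PX PY B L X0 Y0 ∧ Ineff ψ L < ⊤) :
    ∃ L X0 Y0, Feasible PX PY B L X0 Y0 ∧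
      ∀ L' X0' Y0', Feasible PX PY B L' X0' Y0' → Ineff ψ L ≤ Ineff ψ L' :=
  stmt_2_general PX PY B hPX hPY hB ψ hmeas
end
end

section
/- Let ψ : (0,∞)² → [0,∞) and L : (0,∞) → [0,∞) be measurable, and define φ_ψ(θ) = ∫₀^∞ ψ(r cos θ, r sin θ) dr for θ ∈ (0, π/2). Then, with all integrals taken in [0,∞] (conventions c/0 = ∞ for c > 0, 0/0 = 0): ∬_{(0,∞)²} ψ(p_X, p_Y)/(p_Y · L(p_X/p_Y)) dp_X dp_Y = ∫₀^∞ φ_ψ(arccot p) · sin(arccot p) / L(p) dp, where sin(arccot p) = 1/√(1 + p²). -/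
open MeasureTheory Set
open scoped ENNReal

noncomputable section

/-- Inverse cotangent with values in `(0, π/2)` for positive arguments. -/
def arccot (p : ℝ) : ℝ := Real.pi / 2 - Real.arctan p

/-- The angular marginal `φ_ψ(θ) = ∫_0^∞ ψ(r cos θ, r sin θ) dr`, valued in `[0,∞]`. -/
def phiAng (ψ : ℝ × ℝ → ℝ) (θ : ℝ) : ℝ≥0∞ :=
  ∫⁻ r in Set.Ioi (0:ℝ), ENNReal.ofReal (ψ (r * Real.cos θ, r * Real.sin θ))

/-!
Substituting `p_X = p_Y · p` in the inner integral turns the integrand into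
`ψ(p_Y p, p_Y) / L(p)`: the Jacobian `p_Y` cancels the `p_Y` in the denominator. After
exchanging the order of integration, `∫₀^∞ ψ(y p, y) dy` is an integral along the ray of
direction `arccot p`, and the radial substitution `r = y / sin (arccot p)` identifies it with
`φ_ψ(arccot p) · sin (arccot p)`.
-/

theorem setLIntegral_Ioi_comp_mul_left (g : ℝ → ℝ≥0∞) {c : ℝ} (hc : 0 < c) :
    ENNReal.ofReal c * ∫⁻ x in Ioi 0, g (c * x) = ∫⁻ x in Ioi 0, g x := by
  have hderiv (x : ℝ) : HasDerivWithinAt (c * ·) c (Ioi 0) x := by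
    simpa using ((hasDerivAt_id x).const_mul c).hasDerivWithinAt
  conv_rhs => rw [← image_const_mul_Ioi_zero hc]
  rw [lintegral_image_eq_lintegral_abs_deriv_mul measurableSet_Ioi (fun x _ => hderiv x)
    (mul_right_injective₀ hc.ne').injOn, abs_of_pos hc,
    lintegral_const_mul' _ _ ENNReal.ofReal_ne_top]

theorem sin_arccot (p : ℝ) : Real.sin (arccot p) = 1 / Real.sqrt (1 + p ^ 2) := by
  rw [arccot, Real.sin_pi_div_two_sub, Real.cos_arctan]

theorem cos_arccot (p : ℝ) : Real.cos (arccot p) = p / Real.sqrt (1 + p ^ 2) := by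
  rw [arccot, Real.cos_pi_div_two_sub, Real.sin_arctan]

theorem phiAng_arccot_mul_sin_arccot (ψ : ℝ × ℝ → ℝ) (p : ℝ) :
    phiAng ψ (arccot p) * ENNReal.ofReal (Real.sin (arccot p))
      = ∫⁻ y in Ioi 0, ENNReal.ofReal (ψ (y * p, y)) := by
  set s := Real.sqrt (1 + p ^ 2)
  have hs : 0 < s⁻¹ := inv_pos.2 (Real.sqrt_pos.2 (by positivity))
  have hphi : phiAng ψ (arccot p)
      = ∫⁻ r in Ioi 0, ENNReal.ofReal (ψ (s⁻¹ * r * p, s⁻¹ * r)) := by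
    refine lintegral_congr fun r => ?_
    rw [sin_arccot, cos_arccot]
    congr 3 <;> ring
  rw [hphi, sin_arccot, one_div, mul_comm]
  exact setLIntegral_Ioi_comp_mul_left (fun y => ENNReal.ofReal (ψ (y * p, y))) hs

theorem setLIntegral_Ioi_div_ofReal_mul_comp_div (f : ℝ → ℝ≥0∞) (L : ℝ → ℝ)
    {y : ℝ} (hy : 0 < y) :
    ∫⁻ x in Ioi 0, f x / ENNReal.ofReal (y * L (x / y))
      = ∫⁻ p in Ioi 0, f (y * p) / ENNReal.ofReal (L p) := by
  rw [← setLIntegral_Ioi_comp_mul_left _ hy,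
    ← lintegral_const_mul' _ _ ENNReal.ofReal_ne_top]
  refine lintegral_congr fun p => ?_
  rw [mul_div_cancel_left₀ _ hy.ne', ENNReal.ofReal_mul hy.le, ← mul_div_assoc,
    ENNReal.mul_div_mul_left _ _ (ENNReal.ofReal_pos.2 hy).ne' ENNReal.ofReal_ne_top]

theorem ineff_eq_lintegral_div {ψ : ℝ × ℝ → ℝ} {L : ℝ → ℝ} (hψ : Measurable ψ)
    (hL : Measurable L) :
    Ineff ψ L
      = ∫⁻ p in Ioi 0,
          (∫⁻ y in Ioi 0, ENNReal.ofReal (ψ (y * p, y))) / ENNReal.ofReal (L p) := by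
  have hmeas_xy : Measurable fun q : ℝ × ℝ =>
      ENNReal.ofReal (ψ q) / ENNReal.ofReal (q.2 * L (q.1 / q.2)) := by fun_prop
  have hmeas_py : Measurable fun q : ℝ × ℝ =>
      ENNReal.ofReal (ψ (q.1 * q.2, q.1)) / ENNReal.ofReal (L q.2) := by fun_prop
  calc Ineff ψ L
      = ∫⁻ y in Ioi 0, ∫⁻ x in Ioi 0,
          ENNReal.ofReal (ψ (x, y)) / ENNReal.ofReal (y * L (x / y)) := by
        rw [Ineff, orth, Measure.volume_eq_prod, ← Measure.prod_restrict,
          lintegral_prod_symm _ hmeas_xy.aemeasurable]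
    _ = ∫⁻ y in Ioi 0, ∫⁻ p in Ioi 0,
          ENNReal.ofReal (ψ (y * p, y)) / ENNReal.ofReal (L p) :=
        setLIntegral_congr_fun measurableSet_Ioi fun y hy =>
          setLIntegral_Ioi_div_ofReal_mul_comp_div _ L hy
    _ = ∫⁻ p in Ioi 0, ∫⁻ y in Ioi 0,
          ENNReal.ofReal (ψ (y * p, y)) / ENNReal.ofReal (L p) :=
        lintegral_lintegral_swap hmeas_py.aemeasurable
    _ = _ := by
        refine lintegral_congr fun p => ?_
        simp_rw [div_eq_mul_inv]
        exact lintegral_mul_const'' _ (by fun_prop)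

theorem stmt_4_general (ψ : ℝ × ℝ → ℝ) (L : ℝ → ℝ)
    (hψmeas : Measurable ψ)
    (hLmeas : Measurable L) :
    Ineff ψ L
      = (∫⁻ p in Set.Ioi (0:ℝ),
          phiAng ψ (arccot p) * ENNReal.ofReal (Real.sin (arccot p))
            / ENNReal.ofReal (L p)) ∧
    ∀ p : ℝ, Real.sin (arccot p) = 1 / Real.sqrt (1 + p ^ 2) := by
  refine ⟨?_, sin_arccot⟩
  simp_rw [phiAng_arccot_mul_sin_arccot]
  exact ineff_eq_lintegral_div hψmeas hLmeas

theorem stmt_4 (ψ : ℝ × ℝ → ℝ) (L : ℝ → ℝ)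
    (hψmeas : Measurable ψ) (hψnn : ∀ q, 0 ≤ ψ q)
    (hLmeas : Measurable L) (hLnn : ∀ p ∈ Set.Ioi (0:ℝ), 0 ≤ L p) :
    Ineff ψ L
      = (∫⁻ p in Set.Ioi (0:ℝ),
          phiAng ψ (arccot p) * ENNReal.ofReal (Real.sin (arccot p))
            / ENNReal.ofReal (L p)) ∧
    ∀ p : ℝ, Real.sin (arccot p) = 1 / Real.sqrt (1 + p ^ 2) :=
  stmt_4_general ψ L hψmeas hLmeas
end
end

section
/- Let ψ₁, ψ₂ : (0,∞)² → [0,∞) be measurable belief functions and suppose there is a constant α > 0 such that φ_{ψ₁}(θ) = α · φ_{ψ₂}(θ) for almost every θ ∈ (0, π/2), where φ_ψ(θ) = ∫₀^∞ ψ(r cos θ, r sin θ) dr. Then a feasible triple (L, X₀, Y₀) is optimal for ψ₁ if and only if it is optimal for ψ₂. -/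
open MeasureTheory Set
open scoped ENNReal

noncomputable section

/-!
In polar coordinates `(p_X, p_Y) = (r cos θ, r sin θ)` the Jacobian `r` cancels the factor
`p_Y = r sin θ` of the integrand, while `L (p_X / p_Y) = L (cot θ)` depends on `θ` alone, so
`I_ψ(L) = ∫_0^{π/2} φ_ψ(θ) / (sin θ · L(cot θ)) dθ` depends on `ψ` only through `φ_ψ`.
Proportional angular marginals therefore give `I_{ψ₁} = α · I_{ψ₂}` on every allocation, and
scaling the objective by `α > 0` does not change its minimizers.
-/

open Real

def polarOrth : Set (ℝ × ℝ) := Ioi (0:ℝ) ×ˢ Ioo 0 (π / 2)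

lemma polarCoord_target_inter_preimage_orth :
    polarCoord.target ∩ polarCoord.symm ⁻¹' orth = polarOrth := by
  ext ⟨r, θ⟩
  simp only [polarCoord_target, polarCoord_symm_apply, orth, polarOrth, mem_inter_iff,
    mem_preimage, mem_prod, mem_Ioi, mem_Ioo]
  constructor
  · rintro ⟨⟨hr, hθ₁, hθ₂⟩, hcos, hsin⟩
    have hθ_pos : 0 < θ := by
      by_contra! h
      linarith [mul_nonpos_of_nonneg_of_nonpos hr.le (sin_nonpos_of_nonpos_of_neg_pi_le h hθ₁.le)]
    have hθ_lt : θ < π / 2 := by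
      by_contra! h
      linarith [mul_nonpos_of_nonneg_of_nonpos hr.le
        (cos_nonpos_of_pi_div_two_le_of_le h (by linarith))]
    exact ⟨hr, hθ_pos, hθ_lt⟩
  · rintro ⟨hr, hθ₁, hθ₂⟩
    have hcos : 0 < cos θ := cos_pos_of_mem_Ioo ⟨by linarith, hθ₂⟩
    have hsin : 0 < sin θ := sin_pos_of_pos_of_lt_pi hθ₁ (by linarith)
    exact ⟨⟨hr, by linarith, by linarith⟩, mul_pos hr hcos, mul_pos hr hsin⟩

lemma setLIntegral_orth_eq_polar {g : ℝ × ℝ → ℝ≥0∞} (hg : Measurable g) :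
    ∫⁻ q in orth, g q =
      ∫⁻ θ in Ioo 0 (π / 2), ∫⁻ r in Ioi 0, ENNReal.ofReal r * g (r * cos θ, r * sin θ) := by
  have horth : MeasurableSet orth := measurableSet_Ioi.prod measurableSet_Ioi
  have hpre : MeasurableSet (polarCoord.symm ⁻¹' orth) :=
    continuous_polarCoord_symm.measurable horth
  have hmeas : Measurable fun p : ℝ × ℝ => ENNReal.ofReal p.1 * g (polarCoord.symm p) := by
    have := continuous_polarCoord_symm.measurable
    fun_prop
  calc ∫⁻ q in orth, g q
      = ∫⁻ p in polarCoord.target, (polarCoord.symm ⁻¹' orth).indicator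
          (fun p => ENNReal.ofReal p.1 * g (polarCoord.symm p)) p := by
        rw [← lintegral_indicator horth, ← lintegral_comp_polarCoord_symm]
        congr 1 with p
        rw [smul_eq_mul, indicator_mul_right, ← indicator_comp_right]
        rfl
    _ = ∫⁻ p in polarOrth, ENNReal.ofReal p.1 * g (polarCoord.symm p) := by
        rw [lintegral_indicator hpre, Measure.restrict_restrict hpre, inter_comm,
          polarCoord_target_inter_preimage_orth]
    _ = _ := by
        rw [polarOrth, Measure.volume_eq_prod, ← Measure.prod_restrict,
          lintegral_prod_symm _ hmeas.aemeasurable]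
        simp only [polarCoord_symm_apply]

lemma ineff_eq_lintegral_phiAng {ψ : ℝ × ℝ → ℝ} (hψ : Measurable ψ) {L : ℝ → ℝ}
    (hL : Measurable L) :
    Ineff ψ L =
      ∫⁻ θ in Ioo 0 (π / 2), phiAng ψ θ / ENNReal.ofReal (sin θ * L (cos θ / sin θ)) := by
  rw [Ineff, setLIntegral_orth_eq_polar (by fun_prop)]
  refine setLIntegral_congr_fun measurableSet_Ioo fun θ _ => ?_
  have hray : ∀ r ∈ Ioi (0:ℝ),
      ENNReal.ofReal r * (ENNReal.ofReal (ψ (r * cos θ, r * sin θ)) /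
        ENNReal.ofReal (r * sin θ * L (r * cos θ / (r * sin θ)))) =
      ENNReal.ofReal (ψ (r * cos θ, r * sin θ)) / ENNReal.ofReal (sin θ * L (cos θ / sin θ)) := by
    intro r hr
    rw [mul_div_mul_left _ _ (ne_of_gt hr), mul_assoc, ENNReal.ofReal_mul (le_of_lt hr),
      ← mul_div_assoc, ENNReal.mul_div_mul_left _ _ (by simpa using hr) ENNReal.ofReal_ne_top]
  rw [setLIntegral_congr_fun measurableSet_Ioi hray, phiAng]
  simp only [div_eq_mul_inv]
  exact lintegral_mul_const _ (by fun_prop)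

lemma ineff_eq_const_mul_of_phiAng_ae_eq {ψ₁ ψ₂ : ℝ × ℝ → ℝ} (hψ₁ : Measurable ψ₁)
    (hψ₂ : Measurable ψ₂) {c : ℝ≥0∞} (hc : c ≠ ∞)
    (hphi : ∀ᵐ θ ∂(volume.restrict (Ioo 0 (π / 2))), phiAng ψ₁ θ = c * phiAng ψ₂ θ)
    {L : ℝ → ℝ} (hL : Measurable L) :
    Ineff ψ₁ L = c * Ineff ψ₂ L := by
  rw [ineff_eq_lintegral_phiAng hψ₁ hL, ineff_eq_lintegral_phiAng hψ₂ hL,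
    ← lintegral_const_mul' _ _ hc]
  exact lintegral_congr_ae (hphi.mono fun θ hθ => by simp only [hθ, mul_div_assoc])

lemma isOptimal_iff_of_ineff_eq_const_mul {PX PY B : ℝ} {ψ₁ ψ₂ : ℝ × ℝ → ℝ} {c : ℝ≥0∞}
    (hc₀ : c ≠ 0) (hc : c ≠ ∞)
    (hineff : ∀ L, Measurable L → Ineff ψ₁ L = c * Ineff ψ₂ L) (L : ℝ → ℝ) (X0 Y0 : ℝ) :
    IsOptimal PX PY B ψ₁ L X0 Y0 ↔ IsOptimal PX PY B ψ₂ L X0 Y0 := by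
  refine and_congr_right fun hF => forall₃_congr fun L' X0' Y0' => imp_congr_right fun hF' => ?_
  rw [hineff L hF.1, hineff L' hF'.1, ENNReal.mul_le_mul_iff_right hc₀ hc]

theorem stmt_5_general (PX PY B : ℝ)
    (ψ₁ ψ₂ : ℝ × ℝ → ℝ)
    (hψ₁meas : Measurable ψ₁)
    (hψ₂meas : Measurable ψ₂)
    (α : ℝ) (hα : 0 < α)
    (hphi : ∀ᵐ θ ∂(volume.restrict (Set.Ioo 0 (Real.pi / 2))),
      phiAng ψ₁ θ = ENNReal.ofReal α * phiAng ψ₂ θ) :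
    ∀ L X0 Y0, Feasible PX PY B L X0 Y0 →
      (IsOptimal PX PY B ψ₁ L X0 Y0 ↔ IsOptimal PX PY B ψ₂ L X0 Y0) := fun L X0 Y0 _ =>
  isOptimal_iff_of_ineff_eq_const_mul (ENNReal.ofReal_pos.mpr hα).ne' ENNReal.ofReal_ne_top
    (fun _ hL => ineff_eq_const_mul_of_phiAng_ae_eq hψ₁meas hψ₂meas ENNReal.ofReal_ne_top hphi hL)
    L X0 Y0

theorem stmt_5 (PX PY B : ℝ) (hPX : 0 < PX) (hPY : 0 < PY) (hB : 0 < B)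
    (ψ₁ ψ₂ : ℝ × ℝ → ℝ)
    (hψ₁meas : Measurable ψ₁) (hψ₁nn : ∀ q, 0 ≤ ψ₁ q)
    (hψ₂meas : Measurable ψ₂) (hψ₂nn : ∀ q, 0 ≤ ψ₂ q)
    (α : ℝ) (hα : 0 < α)
    (hphi : ∀ᵐ θ ∂(volume.restrict (Set.Ioo 0 (Real.pi / 2))),
      phiAng ψ₁ θ = ENNReal.ofReal α * phiAng ψ₂ θ) :
    ∀ L X0 Y0, Feasible PX PY B L X0 Y0 →
      (IsOptimal PX PY B ψ₁ L X0 Y0 ↔ IsOptimal PX PY B ψ₂ L X0 Y0) :=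
  stmt_5_general PX PY B ψ₁ ψ₂ hψ₁meas hψ₂meas α hα hphi
end
end

section
/- Let ψ be a measurable belief function with φ_ψ(θ) = ∫₀^∞ ψ(r cos θ, r sin θ) dr positive on a set of θ ∈ (0, π/2) of positive measure, and suppose some feasible triple has finite expected CFMM inefficiency I_ψ. Then at any optimal feasible triple (L, X₀, Y₀), all three constraints hold with equality: ∫₀^{p₀} L(p)/p dp = Y₀, ∫_{p₀}^∞ L(p)/p² dp = X₀, and P_X·X₀ + P_Y·Y₀ = B. -/
/-!
If the budget were not exhausted, scaling `L`, `X₀`, `Y₀` by some `c > 1` would keep the triple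
feasible and divide `I_ψ(L)` by `c`. This is a strict improvement because `I_ψ(L)` is finite
(it is at most the inefficiency of the given finite triple) and nonzero: in polar coordinates,
`I_ψ(L) = 0` forces `φ_ψ = 0` almost everywhere on `(0, π/2)`. Applied to the triple whose
reserves are exactly the two integrals of `L`, this shows that these integrals already exhaust
the budget, so they equal `X₀` and `Y₀`.
-/

open MeasureTheory Set
open scoped ENNReal

noncomputable section

open Filter Topology

lemma measurableSet_orth : MeasurableSet orth := measurableSet_Ioi.prod measurableSet_Ioi

lemma polarCoord_symm_mapsTo_orth :
    MapsTo polarCoord.symm (Ioi (0:ℝ) ×ˢ Ioo 0 (Real.pi / 2)) orth := by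
  rintro ⟨r, θ⟩ ⟨hr, hθ₀, hθ₁⟩
  have hcos : 0 < Real.cos θ := Real.cos_pos_of_mem_Ioo ⟨by linarith [Real.pi_pos], hθ₁⟩
  have hsin : 0 < Real.sin θ := Real.sin_pos_of_pos_of_lt_pi hθ₀ (by linarith [Real.pi_pos])
  exact ⟨mul_pos hr hcos, mul_pos hr hsin⟩

lemma setLIntegral_polarCoord_symm_le_setLIntegral_orth (f : ℝ × ℝ → ℝ≥0∞) :
    ∫⁻ p in Ioi (0:ℝ) ×ˢ Ioo 0 (Real.pi / 2), ENNReal.ofReal p.1 * f (polarCoord.symm p) ≤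
      ∫⁻ q in orth, f q := by
  have hsub : Ioi (0:ℝ) ×ˢ Ioo 0 (Real.pi / 2) ⊆ polarCoord.target :=
    prod_mono subset_rfl <|
      Ioo_subset_Ioo (by linarith [Real.pi_pos]) (half_le_self Real.pi_pos.le)
  calc ∫⁻ p in Ioi (0:ℝ) ×ˢ Ioo 0 (Real.pi / 2), ENNReal.ofReal p.1 * f (polarCoord.symm p)
      = ∫⁻ p in Ioi (0:ℝ) ×ˢ Ioo 0 (Real.pi / 2),
          ENNReal.ofReal p.1 • orth.indicator f (polarCoord.symm p) :=
        setLIntegral_congr_fun (measurableSet_Ioi.prod measurableSet_Ioo) fun p hp => by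
          rw [indicator_of_mem (polarCoord_symm_mapsTo_orth hp), smul_eq_mul]
    _ ≤ ∫⁻ p in polarCoord.target,
          ENNReal.ofReal p.1 • orth.indicator f (polarCoord.symm p) :=
        lintegral_mono_set hsub
    _ = ∫⁻ q in orth, f q := by
        rw [lintegral_comp_polarCoord_symm, lintegral_indicator measurableSet_orth]

lemma setLIntegral_Ioi_ofReal_mul_eq_zero_iff {g : ℝ → ℝ≥0∞} (hg : Measurable g) :
    ∫⁻ r in Ioi (0:ℝ), ENNReal.ofReal r * g r = 0 ↔ ∫⁻ r in Ioi (0:ℝ), g r = 0 := by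
  rw [setLIntegral_eq_zero_iff measurableSet_Ioi (by fun_prop),
    setLIntegral_eq_zero_iff measurableSet_Ioi hg]
  refine eventually_congr (Eventually.of_forall fun r => forall_congr' fun hr => ?_)
  simp [ENNReal.ofReal_eq_zero, not_le.mpr (show (0:ℝ) < r from hr)]

lemma volume_phiAng_ne_zero_eq_zero {ψ : ℝ × ℝ → ℝ} (hψ : Measurable ψ)
    (h : ∫⁻ q in orth, ENNReal.ofReal (ψ q) = 0) :
    volume {θ ∈ Ioo (0:ℝ) (Real.pi / 2) | phiAng ψ θ ≠ 0} = 0 := by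
  set g : ℝ × ℝ → ℝ≥0∞ := fun p => ENNReal.ofReal p.1 * ENNReal.ofReal (ψ (polarCoord.symm p))
  have hg : Measurable g := by unfold g; fun_prop
  have hpolar : ∫⁻ θ in Ioo (0:ℝ) (Real.pi / 2), ∫⁻ r in Ioi (0:ℝ), g (r, θ) = 0 := by
    rw [← setLIntegral_prod_symm g hg.aemeasurable, ← Measure.volume_eq_prod]
    exact nonpos_iff_eq_zero.mp (h ▸ setLIntegral_polarCoord_symm_le_setLIntegral_orth _)
  rw [setLIntegral_eq_zero_iff measurableSet_Ioo hg.lintegral_prod_left] at hpolar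
  refine measure_mono_null (fun θ ⟨hθ, hphi⟩ => ?_) (ae_iff.mp hpolar)
  intro hzero
  refine hphi <| (setLIntegral_Ioi_ofReal_mul_eq_zero_iff (by fun_prop)).mp ?_
  simpa only [g, polarCoord_symm_apply] using hzero hθ

lemma lintegral_eq_zero_of_lintegral_div_eq_zero {α : Type*} [MeasurableSpace α]
    {μ : Measure α} {f g : α → ℝ≥0∞} (hf : Measurable f) (hg : Measurable g) (hg_top : ∀ x, g x ≠ ⊤)
    (h : ∫⁻ x, f x / g x ∂μ = 0) : ∫⁻ x, f x ∂μ = 0 := by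
  rw [lintegral_eq_zero_iff (by fun_prop)] at h
  rw [lintegral_eq_zero_iff hf]
  filter_upwards [h] with x hx
  exact (ENNReal.div_eq_zero_iff.mp hx).resolve_right (hg_top x)

lemma Ineff_ne_zero {ψ : ℝ × ℝ → ℝ} (hψ : Measurable ψ)
    (hphi : 0 < volume {θ ∈ Ioo (0:ℝ) (Real.pi / 2) | phiAng ψ θ ≠ 0})
    {L : ℝ → ℝ} (hL : Measurable L) : Ineff ψ L ≠ 0 :=
  fun h => hphi.ne' <| volume_phiAng_ne_zero_eq_zero hψ <|
    lintegral_eq_zero_of_lintegral_div_eq_zero (by fun_prop) (by fun_prop)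
      (fun _ => ENNReal.ofReal_ne_top) h

lemma Ineff_const_mul (ψ : ℝ × ℝ → ℝ) (L : ℝ → ℝ) {c : ℝ} (hc : 0 < c) :
    Ineff ψ (fun p => c * L p) = Ineff ψ L / ENNReal.ofReal c := by
  have hc₀ : ENNReal.ofReal c ≠ 0 := ENNReal.ofReal_ne_zero_iff.mpr hc
  simp only [Ineff, div_eq_mul_inv]
  rw [← lintegral_mul_const' _ _ (ENNReal.inv_ne_top.mpr hc₀)]
  congr 1 with q
  rw [mul_left_comm, ENNReal.ofReal_mul hc.le,
    ENNReal.mul_inv (Or.inl hc₀) (Or.inl ENNReal.ofReal_ne_top), mul_comm (ENNReal.ofReal c)⁻¹,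
    mul_assoc]

protected lemma ENNReal.div_lt_self {a b : ℝ≥0∞} (h0 : a ≠ 0) (htop : a ≠ ⊤) (hb : 1 < b) :
    a / b < a := by
  rw [ENNReal.div_lt_iff (Or.inr h0) (Or.inr htop), mul_comm]
  simpa using ENNReal.mul_lt_mul_left h0 htop hb

lemma setLIntegral_ofReal_const_mul_div {c : ℝ} (hc : 0 ≤ c) (s : Set ℝ) (f w : ℝ → ℝ) :
    ∫⁻ p in s, ENNReal.ofReal (c * f p / w p) =
      ENNReal.ofReal c * ∫⁻ p in s, ENNReal.ofReal (f p / w p) := by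
  simp_rw [mul_div_assoc, ENNReal.ofReal_mul hc]
  exact lintegral_const_mul' _ _ ENNReal.ofReal_ne_top

lemma exists_one_lt_mul_le {s B : ℝ} (h : s < B) : ∃ c, 1 < c ∧ c * s ≤ B := by
  have hlim : Tendsto (fun c => c * s) (𝓝[>] 1) (𝓝 s) := by
    simpa using ((continuous_mul_const s).tendsto 1).mono_left nhdsWithin_le_nhds
  exact ((hlim.eventually (eventually_le_nhds h)).and self_mem_nhdsWithin).exists.imp
    fun c hc => ⟨hc.2, hc.1⟩

section Feasible

variable {PX PY B : ℝ} {L : ℝ → ℝ} {X0 Y0 : ℝ}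

lemma Feasible.const_mul (h : Feasible PX PY B L X0 Y0) {c : ℝ} (hc : 0 ≤ c)
    (hbudget : c * (PX * X0 + PY * Y0) ≤ B) :
    Feasible PX PY B (fun p => c * L p) (c * X0) (c * Y0) := by
  obtain ⟨hL, hL₀, hX0, hY0, hY, hX, -⟩ := h
  refine ⟨measurable_const.mul hL, fun p hp => mul_nonneg hc (hL₀ p hp), mul_nonneg hc hX0,
    mul_nonneg hc hY0, ?_, ?_, by linarith⟩
  · rw [setLIntegral_ofReal_const_mul_div hc, ENNReal.ofReal_mul hc]
    gcongr
  · rw [setLIntegral_ofReal_const_mul_div hc, ENNReal.ofReal_mul hc]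
    gcongr

lemma Feasible.toReal_reserves (h : Feasible PX PY B L X0 Y0) (hPX : 0 ≤ PX) (hPY : 0 ≤ PY) :
    Feasible PX PY B L (∫⁻ p in Ioi (PX / PY), ENNReal.ofReal (L p / p ^ 2)).toReal
      (∫⁻ p in Ioc 0 (PX / PY), ENNReal.ofReal (L p / p)).toReal := by
  obtain ⟨hL, hL₀, hX0, hY0, hY, hX, hbudget⟩ := h
  have hY_ne_top := ne_top_of_le_ne_top ENNReal.ofReal_ne_top hY
  have hX_ne_top := ne_top_of_le_ne_top ENNReal.ofReal_ne_top hX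
  refine ⟨hL, hL₀, ENNReal.toReal_nonneg, ENNReal.toReal_nonneg,
    (ENNReal.ofReal_toReal hY_ne_top).ge, (ENNReal.ofReal_toReal hX_ne_top).ge, ?_⟩
  have := ENNReal.toReal_le_of_le_ofReal hY0 hY
  have := ENNReal.toReal_le_of_le_ofReal hX0 hX
  calc _ ≤ PX * X0 + PY * Y0 := by gcongr
    _ ≤ B := hbudget

lemma IsOptimal.budget_le_cost {ψ : ℝ × ℝ → ℝ} {X Y : ℝ}
    (hopt : IsOptimal PX PY B ψ L X0 Y0) (h0 : Ineff ψ L ≠ 0) (htop : Ineff ψ L ≠ ⊤)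
    (h : Feasible PX PY B L X Y) :
    B ≤ PX * X + PY * Y := by
  by_contra! hslack
  obtain ⟨c, hc, hcB⟩ := exists_one_lt_mul_le hslack
  have hc₀ : 0 < c := one_pos.trans hc
  have hle := hopt.2 _ _ _ (h.const_mul hc₀.le hcB)
  rw [Ineff_const_mul ψ L hc₀] at hle
  exact absurd hle (not_le.mpr (ENNReal.div_lt_self h0 htop (ENNReal.one_lt_ofReal.mpr hc)))

end Feasible

theorem stmt_6_general (PX PY B : ℝ) (hPX : 0 < PX) (hPY : 0 < PY)
    (ψ : ℝ × ℝ → ℝ) (hmeas : Measurable ψ)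
    (hphi : 0 < volume {θ ∈ Set.Ioo (0:ℝ) (Real.pi / 2) | phiAng ψ θ ≠ 0})
    (hfeas : ∃ L X0 Y0, Feasible PX PY B L X0 Y0 ∧ Ineff ψ L < ⊤)
    (L : ℝ → ℝ) (X0 Y0 : ℝ) (hopt : IsOptimal PX PY B ψ L X0 Y0) :
    (∫⁻ p in Set.Ioc (0:ℝ) (PX / PY), ENNReal.ofReal (L p / p)) = ENNReal.ofReal Y0 ∧
    (∫⁻ p in Set.Ioi (PX / PY), ENNReal.ofReal (L p / p ^ 2)) = ENNReal.ofReal X0 ∧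
    PX * X0 + PY * Y0 = B := by
  obtain ⟨L₁, X₁, Y₁, hfeas₁, hfin₁⟩ := hfeas
  have htop : Ineff ψ L ≠ ⊤ := ((hopt.2 _ _ _ hfeas₁).trans_lt hfin₁).ne
  have hcost := hopt.budget_le_cost (Ineff_ne_zero hmeas hphi hopt.1.1) htop
    (hopt.1.toReal_reserves hPX.le hPY.le)
  obtain ⟨-, -, hX0, hY0, hY, hX, hbudget⟩ := hopt.1
  have hY_le := ENNReal.toReal_le_of_le_ofReal hY0 hY
  have hX_le := ENNReal.toReal_le_of_le_ofReal hX0 hX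
  refine ⟨le_antisymm hY (ENNReal.ofReal_le_of_le_toReal ?_),
    le_antisymm hX (ENNReal.ofReal_le_of_le_toReal ?_), by nlinarith⟩
  · nlinarith
  · nlinarith

theorem stmt_6 (PX PY B : ℝ) (hPX : 0 < PX) (hPY : 0 < PY) (hB : 0 < B)
    (ψ : ℝ × ℝ → ℝ) (hmeas : Measurable ψ) (hnn : ∀ q, 0 ≤ ψ q)
    (hphi : 0 < volume {θ ∈ Set.Ioo (0:ℝ) (Real.pi / 2) | phiAng ψ θ ≠ 0})
    (hfeas : ∃ L X0 Y0, Feasible PX PY B L X0 Y0 ∧ Ineff ψ L < ⊤)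
    (L : ℝ → ℝ) (X0 Y0 : ℝ) (hopt : IsOptimal PX PY B ψ L X0 Y0) :
    (∫⁻ p in Set.Ioc (0:ℝ) (PX / PY), ENNReal.ofReal (L p / p)) = ENNReal.ofReal Y0 ∧
    (∫⁻ p in Set.Ioi (PX / PY), ENNReal.ofReal (L p / p ^ 2)) = ENNReal.ofReal X0 ∧
    PX * X0 + PY * Y0 = B :=
  stmt_6_general PX PY B hPX hPY ψ hmeas hphi hfeas L X0 Y0 hopt
end
end

section
/- Fix reference prices P_X, P_Y > 0 and set p₀ = P_X/P_Y. Let L : (0,∞) → [0,∞) be measurable with Y₀ = ∫₀^{p₀} L(p)/p dp < ∞ and X₀ = ∫_{p₀}^∞ L(p)/p² dp < ∞, and set the budget B = P_X·X₀ + P_Y·Y₀. Define the belief ψ(p_X, p_Y) = L(p_X/p_Y)² · (p_Y/p_X) for (p_X, p_Y) ∈ (0, P_X] × (0, P_Y] and ψ(p_X, p_Y) = 0 otherwise. Then the triple (L, X₀, Y₀) is optimal for ψ: I_ψ(L) ≤ I_ψ(L') for every feasible triple (L', X₀', Y₀') with budget B. -/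
open MeasureTheory Set
open scoped ENNReal

noncomputable section

/-!
The cost `P_X·X₀ + P_Y·Y₀` of an allocation `M` and, after the substitution `p_X = p·p_Y`, its
inefficiency are integrals against one measure `ν(dp) = min(P_Y, P_X/p)/p dp` on `(0,∞)`:
the cost is `∫ M dν` and `I_ψ(M) = ∫ L²/M dν`. Integrating the pointwise AM-GM inequality
`L²/M + M ≥ 2L` against `ν` gives `I_ψ(M) + cost(M) ≥ 2 cost(L) = 2B`, so
`I_ψ(M) ≥ B = I_ψ(L)` as soon as `cost(M) ≤ B`.
-/

theorem ENNReal.two_mul_le_sq_div_add (a b : ℝ≥0∞) : 2 * a ≤ a ^ 2 / b + b := by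
  rcases eq_or_ne b 0 with rfl | hb0
  · rcases eq_or_ne a 0 with rfl | ha0
    · simp
    · simp [ENNReal.div_zero (pow_ne_zero 2 ha0)]
  rcases eq_or_ne b ⊤ with rfl | hbt
  · simp
  rcases eq_or_ne a ⊤ with rfl | hat
  · simp [ENNReal.top_pow, ENNReal.top_div_of_ne_top hbt]
  refine (ENNReal.mul_le_mul_iff_left hb0 hbt).1 ?_
  rw [add_mul, ENNReal.div_mul_cancel hb0 hbt]
  lift a to NNReal using hat
  lift b to NNReal using hbt
  rw [← sq]
  exact_mod_cast two_mul_le_add_sq a b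

theorem ENNReal.sq_div_self {a : ℝ≥0∞} (ha : a ≠ ⊤) : a ^ 2 / a = a := by
  rcases eq_or_ne a 0 with rfl | ha0
  · simp
  · rw [sq, ENNReal.mul_div_cancel_right ha0 ha]

theorem lintegral_le_lintegral_sq_div {α : Type*} [MeasurableSpace α] {μ : Measure α}
    {f g : α → ℝ≥0∞} (hg : AEMeasurable g μ) (hf : ∫⁻ x, f x ∂μ ≠ ⊤)
    (hgf : ∫⁻ x, g x ∂μ ≤ ∫⁻ x, f x ∂μ) :
    ∫⁻ x, f x ∂μ ≤ ∫⁻ x, f x ^ 2 / g x ∂μ := by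
  refine (ENNReal.add_le_add_iff_right hf).1 ?_
  calc ∫⁻ x, f x ∂μ + ∫⁻ x, f x ∂μ = ∫⁻ x, 2 * f x ∂μ := by
        rw [← two_mul, lintegral_const_mul' _ _ ENNReal.ofNat_ne_top]
    _ ≤ ∫⁻ x, (f x ^ 2 / g x + g x) ∂μ :=
        lintegral_mono fun x => ENNReal.two_mul_le_sq_div_add _ _
    _ = ∫⁻ x, f x ^ 2 / g x ∂μ + ∫⁻ x, g x ∂μ := lintegral_add_right' _ hg
    _ ≤ ∫⁻ x, f x ^ 2 / g x ∂μ + ∫⁻ x, f x ∂μ := by gcongr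

theorem lintegral_eq_ofReal_mul_lintegral_comp_mul_left (g : ℝ → ℝ≥0∞) {c : ℝ}
    (hc : 0 < c) : ∫⁻ x, g x = ENNReal.ofReal c * ∫⁻ p, g (c * p) := by
  have h := lintegral_map_equiv g (MeasurableEquiv.mulLeft₀ c hc.ne') (μ := volume)
  rw [MeasurableEquiv.coe_mulLeft₀, Real.map_volume_mul_left hc.ne', lintegral_smul_measure,
    abs_of_pos (inv_pos.2 hc)] at h
  rw [← h, smul_eq_mul, ← mul_assoc, ← ENNReal.ofReal_mul hc.le, mul_inv_cancel₀ hc.ne',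
    ENNReal.ofReal_one, one_mul]

theorem setLIntegral_Ioc_comp_div_div_ofReal (k : ℝ → ℝ≥0∞) (a : ℝ) {c : ℝ}
    (hc : 0 < c) :
    ∫⁻ x in Ioc 0 a, k (x / c) / ENNReal.ofReal x
      = ∫⁻ p in Ioc 0 (a / c), k p / ENNReal.ofReal p := by
  have hmem : ∀ p, c * p ∈ Ioc 0 a ↔ p ∈ Ioc 0 (a / c) := fun p => by
    simp only [mem_Ioc, le_div_iff₀' hc, mul_pos_iff_of_pos_left hc]
  rw [← lintegral_indicator measurableSet_Ioc,
    lintegral_eq_ofReal_mul_lintegral_comp_mul_left _ hc,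
    ← lintegral_indicator measurableSet_Ioc, ← lintegral_const_mul' _ _ ENNReal.ofReal_ne_top]
  refine lintegral_congr fun p => ?_
  by_cases hp : p ∈ Ioc 0 (a / c)
  · rw [indicator_of_mem ((hmem p).2 hp), indicator_of_mem hp, mul_div_cancel_left₀ _ hc.ne',
      ENNReal.ofReal_mul hc.le, ← mul_div_assoc,
      ENNReal.mul_div_mul_left _ _ (ENNReal.ofReal_pos.2 hc).ne' ENNReal.ofReal_ne_top]
  · rw [indicator_of_notMem (mt (hmem p).1 hp), indicator_of_notMem hp, mul_zero]

theorem setLIntegral_Ioc_setLIntegral_Ioc_div_comm (h : ℝ → ℝ≥0∞) (hh : Measurable h)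
    (a b : ℝ) :
    ∫⁻ y in Ioc 0 b, ∫⁻ p in Ioc 0 (a / y), h p
      = ∫⁻ p in Ioi 0, ENNReal.ofReal (min b (a / p)) * h p := by
  set S : Set (ℝ × ℝ) := {z | z.1 ∈ Ioc 0 b ∧ z.2 ∈ Ioc 0 (a / z.1)}
  have hS : MeasurableSet S :=
    (measurableSet_Ioc.preimage measurable_fst).inter
      ((measurableSet_lt measurable_const measurable_snd).inter
        (measurableSet_le measurable_snd (measurable_const.div measurable_fst)))
  have hmem : ∀ y p, (y, p) ∈ S ↔ p ∈ Ioi 0 ∧ y ∈ Ioc 0 (min b (a / p)) := fun y p => by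
    simp only [S, mem_ofPred_eq, mem_Ioc, mem_Ioi, le_min_iff]
    constructor
    · rintro ⟨⟨hy, hyb⟩, hp, hpa⟩
      exact ⟨hp, hy, hyb, by rwa [le_div_iff₀ hp, mul_comm, ← le_div_iff₀ hy]⟩
    · rintro ⟨hp, hy, hyb, hya⟩
      exact ⟨⟨hy, hyb⟩, hp, by rwa [le_div_iff₀ hy, mul_comm, ← le_div_iff₀ hp]⟩
  set F : ℝ → ℝ → ℝ≥0∞ := fun y p => S.indicator (fun z => h z.2) (y, p)
  have hF : Measurable (Function.uncurry F) := (hh.comp measurable_snd).indicator hS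
  have hF_y : ∀ y, ∫⁻ p, F y p
      = (Ioc 0 b).indicator (fun y => ∫⁻ p in Ioc 0 (a / y), h p) y := by
    intro y
    by_cases hy : y ∈ Ioc 0 b
    · rw [indicator_of_mem hy, ← lintegral_indicator measurableSet_Ioc]
      refine lintegral_congr fun p => ?_
      simp only [F, S, indicator_apply, mem_ofPred_eq, hy, true_and]
    · rw [indicator_of_notMem hy]
      exact (lintegral_congr fun p => indicator_of_notMem (fun h => hy h.1) _).trans
        lintegral_zero
  have hF_p : ∀ p, ∫⁻ y, F y p
      = (Ioi 0).indicator (fun p => ENNReal.ofReal (min b (a / p)) * h p) p := by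
    intro p
    by_cases hp : p ∈ Ioi 0
    · have hslice : ∀ y, F y p = (Ioc 0 (min b (a / p))).indicator (fun _ => h p) y :=
        fun y => by simp only [F, indicator_apply, hmem, hp, true_and]
      simp_rw [hslice, indicator_of_mem hp, lintegral_indicator_const measurableSet_Ioc,
        Real.volume_Ioc, sub_zero, mul_comm]
    · rw [indicator_of_notMem hp]
      exact (lintegral_congr fun y => indicator_of_notMem
        (fun h => hp ((hmem y p).1 h).1) _).trans lintegral_zero
  calc ∫⁻ y in Ioc 0 b, ∫⁻ p in Ioc 0 (a / y), h p = ∫⁻ y, ∫⁻ p, F y p := by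
        simp_rw [hF_y, lintegral_indicator measurableSet_Ioc]
    _ = ∫⁻ p, ∫⁻ y, F y p := lintegral_lintegral_swap hF.aemeasurable
    _ = ∫⁻ p in Ioi 0, ENNReal.ofReal (min b (a / p)) * h p := by
        simp_rw [hF_p, lintegral_indicator measurableSet_Ioi]

-- `min(P_Y, P_X/p)` is the length of the `p_Y`-range of the ray `p_X = p·p_Y` inside
-- `(0, P_X] × (0, P_Y]`.
def budgetMeasure (PX PY : ℝ) : Measure ℝ :=
  (volume.restrict (Ioi 0)).withDensity fun p => ENNReal.ofReal (min PY (PX / p) / p)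

theorem lintegral_budgetMeasure {PX PY : ℝ} (hPX : 0 < PX) (hPY : 0 < PY) (N : ℝ → ℝ) :
    ∫⁻ p, ENNReal.ofReal (N p) ∂budgetMeasure PX PY
      = ENNReal.ofReal PY * (∫⁻ p in Ioc 0 (PX / PY), ENNReal.ofReal (N p / p))
        + ENNReal.ofReal PX * (∫⁻ p in Ioi (PX / PY), ENNReal.ofReal (N p / p ^ 2)) := by
  rw [budgetMeasure, lintegral_withDensity_eq_lintegral_mul_non_measurable _ (by fun_prop)
      (ae_of_all _ fun _ => ENNReal.ofReal_lt_top),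
    ← Ioc_union_Ioi_eq_Ioi (div_pos hPX hPY).le, lintegral_union measurableSet_Ioi
      Ioc_disjoint_Ioi_same, ← lintegral_const_mul' _ _ ENNReal.ofReal_ne_top,
    ← lintegral_const_mul' _ _ ENNReal.ofReal_ne_top]
  congr 1
  · refine setLIntegral_congr_fun measurableSet_Ioc fun p ⟨hp, hpp₀⟩ => ?_
    have hmin : min PY (PX / p) = PY := by
      rw [le_div_iff₀ hPY] at hpp₀
      exact min_eq_left (by rw [le_div_iff₀ hp]; linarith)
    rw [Pi.mul_apply, hmin, ← ENNReal.ofReal_mul (by positivity), ← ENNReal.ofReal_mul hPY.le]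
    ring_nf
  · refine setLIntegral_congr_fun measurableSet_Ioi fun p (hpp₀ : PX / PY < p) => ?_
    have hp : 0 < p := (div_pos hPX hPY).trans hpp₀
    have hmin : min PY (PX / p) = PX / p := by
      rw [div_lt_iff₀ hPY] at hpp₀
      exact min_eq_right (by rw [div_le_iff₀ hp]; linarith)
    rw [Pi.mul_apply, hmin, ← ENNReal.ofReal_mul (by positivity), ← ENNReal.ofReal_mul hPX.le]
    ring_nf

theorem Feasible.lintegral_budgetMeasure_le {PX PY B X0 Y0 : ℝ} {L : ℝ → ℝ}
    (h : Feasible PX PY B L X0 Y0) (hPX : 0 < PX) (hPY : 0 < PY) :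
    ∫⁻ p, ENNReal.ofReal (L p) ∂budgetMeasure PX PY ≤ ENNReal.ofReal B := by
  obtain ⟨-, -, hX0, hY0, hYint, hXint, hB⟩ := h
  calc ∫⁻ p, ENNReal.ofReal (L p) ∂budgetMeasure PX PY
      = ENNReal.ofReal PY * (∫⁻ p in Ioc 0 (PX / PY), ENNReal.ofReal (L p / p))
        + ENNReal.ofReal PX * (∫⁻ p in Ioi (PX / PY), ENNReal.ofReal (L p / p ^ 2)) :=
        lintegral_budgetMeasure hPX hPY L
    _ ≤ ENNReal.ofReal PY * ENNReal.ofReal Y0 + ENNReal.ofReal PX * ENNReal.ofReal X0 := by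
        gcongr
    _ = ENNReal.ofReal (PX * X0 + PY * Y0) := by
        rw [← ENNReal.ofReal_mul hPY.le, ← ENNReal.ofReal_mul hPX.le,
          ← ENNReal.ofReal_add (by positivity) (by positivity), add_comm]
    _ ≤ ENNReal.ofReal B := ENNReal.ofReal_le_ofReal hB

theorem setLIntegral_Ioc_prod_Ioc_comp_div_div_ofReal (k : ℝ → ℝ≥0∞) (hk : Measurable k)
    (PX PY : ℝ) :
    ∫⁻ q in Ioc 0 PX ×ˢ Ioc 0 PY, k (q.1 / q.2) / ENNReal.ofReal q.1
      = ∫⁻ p, k p ∂budgetMeasure PX PY := by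
  have hF : Measurable fun q : ℝ × ℝ => k (q.1 / q.2) / ENNReal.ofReal q.1 := by fun_prop
  rw [Measure.volume_eq_prod, ← Measure.prod_restrict, lintegral_prod_symm' _ hF,
    setLIntegral_congr_fun measurableSet_Ioc fun y hy =>
      setLIntegral_Ioc_comp_div_div_ofReal k PX hy.1,
    setLIntegral_Ioc_setLIntegral_Ioc_div_comm _ (by fun_prop), budgetMeasure,
    lintegral_withDensity_eq_lintegral_mul_non_measurable _ (by fun_prop)
      (ae_of_all _ fun _ => ENNReal.ofReal_lt_top)]
  refine setLIntegral_congr_fun measurableSet_Ioi fun p (hp : 0 < p) => ?_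
  rw [Pi.mul_apply, ENNReal.ofReal_div_of_pos hp]
  simp only [div_eq_mul_inv]
  ring

def inverseBelief (PX PY : ℝ) (L : ℝ → ℝ) : ℝ × ℝ → ℝ := fun q =>
  if q.1 ∈ Ioc 0 PX ∧ q.2 ∈ Ioc 0 PY then L (q.1 / q.2) ^ 2 * (q.2 / q.1) else 0

theorem ineff_inverseBelief {PX PY : ℝ} {L M : ℝ → ℝ} (hL : Measurable L)
    (hLnn : ∀ p ∈ Ioi (0:ℝ), 0 ≤ L p) (hM : Measurable M) :
    Ineff (inverseBelief PX PY L) M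
      = ∫⁻ p, ENNReal.ofReal (L p) ^ 2 / ENNReal.ofReal (M p) ∂budgetMeasure PX PY := by
  set R : Set (ℝ × ℝ) := Ioc 0 PX ×ˢ Ioc 0 PY
  have hR : R ⊆ orth := prod_mono Ioc_subset_Ioi_self Ioc_subset_Ioi_self
  have hrect : EqOn
      (fun q => ENNReal.ofReal (inverseBelief PX PY L q) / ENNReal.ofReal (q.2 * M (q.1 / q.2)))
      (R.indicator fun q => ENNReal.ofReal (L (q.1 / q.2)) ^ 2 / ENNReal.ofReal (M (q.1 / q.2))
        / ENNReal.ofReal q.1) orth := by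
    rintro ⟨x, y⟩ ⟨hx, hy : 0 < y⟩
    by_cases hq : x ∈ Ioc 0 PX ∧ y ∈ Ioc 0 PY
    · simp only [inverseBelief, if_pos hq, indicator_of_mem (show (x, y) ∈ R from hq)]
      have hY : ENNReal.ofReal y ≠ 0 := (ENNReal.ofReal_pos.2 hy).ne'
      rw [ENNReal.ofReal_mul (sq_nonneg _),
        ENNReal.ofReal_pow (hLnn _ (mem_Ioi.2 (div_pos hx hy))), ENNReal.ofReal_div_of_pos hx,
        ENNReal.ofReal_mul hy.le, ← ENNReal.mul_comm_div, mul_comm (_ / _),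
        ENNReal.mul_div_mul_left _ _ hY ENNReal.ofReal_ne_top, ENNReal.div_right_comm]
    · simp only [inverseBelief, if_neg hq, indicator_of_notMem (show (x, y) ∉ R from hq),
        ENNReal.ofReal_zero, ENNReal.zero_div]
  have horth : MeasurableSet orth := measurableSet_Ioi.prod measurableSet_Ioi
  rw [Ineff, setLIntegral_congr_fun horth hrect,
    setLIntegral_indicator (measurableSet_Ioc.prod measurableSet_Ioc), inter_eq_left.2 hR]
  exact setLIntegral_Ioc_prod_Ioc_comp_div_div_ofReal
    (fun p => ENNReal.ofReal (L p) ^ 2 / ENNReal.ofReal (M p)) (by fun_prop) PX PY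

theorem stmt_9 (PX PY : ℝ) (hPX : 0 < PX) (hPY : 0 < PY)
    (L : ℝ → ℝ) (hLmeas : Measurable L) (hLnn : ∀ p ∈ Set.Ioi (0:ℝ), 0 ≤ L p)
    (X0 Y0 : ℝ) (hX0nn : 0 ≤ X0) (hY0nn : 0 ≤ Y0)
    (hY0 : (∫⁻ p in Set.Ioc (0:ℝ) (PX / PY), ENNReal.ofReal (L p / p))
        = ENNReal.ofReal Y0)
    (hX0 : (∫⁻ p in Set.Ioi (PX / PY), ENNReal.ofReal (L p / p ^ 2))
        = ENNReal.ofReal X0)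
    (B : ℝ) (hB : B = PX * X0 + PY * Y0)
    (ψ : ℝ × ℝ → ℝ)
    (hψ : ψ = fun q => if q.1 ∈ Set.Ioc (0:ℝ) PX ∧ q.2 ∈ Set.Ioc (0:ℝ) PY
        then (L (q.1 / q.2)) ^ 2 * (q.2 / q.1) else 0) :
    Feasible PX PY B L X0 Y0 ∧
    ∀ L' X0' Y0', Feasible PX PY B L' X0' Y0' → Ineff ψ L ≤ Ineff ψ L' := by
  obtain rfl : ψ = inverseBelief PX PY L := hψ
  have hcost : ∫⁻ p, ENNReal.ofReal (L p) ∂budgetMeasure PX PY = ENNReal.ofReal B := by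
    rw [lintegral_budgetMeasure hPX hPY, hY0, hX0, hB, ← ENNReal.ofReal_mul hPY.le,
      ← ENNReal.ofReal_mul hPX.le, ← ENNReal.ofReal_add (by positivity) (by positivity),
      add_comm]
  refine ⟨⟨hLmeas, hLnn, hX0nn, hY0nn, hY0.le, hX0.le, hB.ge⟩, fun L' X0' Y0' hfeas => ?_⟩
  rw [ineff_inverseBelief hLmeas hLnn hLmeas, ineff_inverseBelief hLmeas hLnn hfeas.1]
  simp_rw [ENNReal.sq_div_self ENNReal.ofReal_ne_top]
  exact lintegral_le_lintegral_sq_div hfeas.1.ennreal_ofReal.aemeasurable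
    (hcost ▸ ENNReal.ofReal_ne_top) ((hfeas.lintegral_budgetMeasure_le hPX hPY).trans hcost.ge)
end
end

section
/- Fix reference prices P_X, P_Y > 0, p₀ = P_X/P_Y, and budget B > 0. Let ψ₁, ψ₂ be measurable belief functions whose angular marginals φ_{ψ₁} and φ_{ψ₂} have disjoint supports (up to null sets) in (0, π/2). Let (L₁, X₁, Y₁), (L₂, X₂, Y₂), and (L, X₀, Y₀) be optimal feasible triples for ψ₁, ψ₂, and ψ₁ + ψ₂ respectively, with finite optimal values and constraints holding with equality. Then there exist constants a, b ≥ 0 such that L(p) = a·L₁(p) + b·L₂(p) for almost every p > 0 at which φ_{ψ₁}(arccot p) + φ_{ψ₂}(arccot p) > 0. -/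
open MeasureTheory Set
open scoped ENNReal

noncomputable section

/-- Optimality for `ψ`, with the reserve and budget constraints holding with equality and
a finite optimal value. -/
def IsOptimalEq (PX PY B : ℝ) (ψ : ℝ × ℝ → ℝ) (L : ℝ → ℝ) (X0 Y0 : ℝ) : Prop :=
  IsOptimal PX PY B ψ L X0 Y0 ∧
  (∫⁻ p in Set.Ioc (0:ℝ) (PX / PY), ENNReal.ofReal (L p / p)) = ENNReal.ofReal Y0 ∧
  (∫⁻ p in Set.Ioi (PX / PY), ENNReal.ofReal (L p / p ^ 2)) = ENNReal.ofReal X0 ∧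
  PX * X0 + PY * Y0 = B ∧
  Ineff ψ L < ⊤

open Real

/-!
Substituting `p_X = p · p_Y` turns the inefficiency into the one-dimensional integral
`I_ψ(L) = ∫₀^∞ w_ψ(p) / L(p) dp` with `w_ψ(p) = ∫₀^∞ ψ(p t, t) dt = sin θ · φ_ψ(θ)`,
`θ = arccot p`; so the supports `S₁`, `S₂` of `w_{ψ₁}`, `w_{ψ₂}` meet in a null set.
Let `a`, `b` be the fractions of the budget that `L` spends on `S₁` and `S₂`. Then `a + b ≤ 1`,
so `L' = a L₁ + b L₂` is feasible. Rescaling `L` restricted to `S₁` to the whole budget gives a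
competitor for `ψ₁`, and since `I_ψ(c L) = I_ψ(L) / c`, optimality of `L₁` yields
`I_{ψ₁}(a L₁) ≤ I_{ψ₁}(L)`; likewise for `ψ₂`. Hence `I_{ψ₁+ψ₂}(L') ≤ I_{ψ₁+ψ₂}(L)`, and strict
convexity of `x ↦ 1/x`, applied to the feasible midpoint `(L + L') / 2`, forces `L = L'` almost
everywhere on the support of `w_{ψ₁+ψ₂}`.
-/

theorem ofReal_mul_setLIntegral_comp_mul_left_Ioi_zero {c : ℝ} (hc : 0 < c) (g : ℝ → ℝ≥0∞) :
    ENNReal.ofReal c * ∫⁻ x in Ioi 0, g (c * x) = ∫⁻ x in Ioi 0, g x := by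
  have hderiv : ∀ x ∈ Ioi (0 : ℝ), HasDerivWithinAt (c * ·) c (Ioi 0) x := fun x _ => by
    simpa using ((hasDerivAt_id x).const_mul c).hasDerivWithinAt
  conv_rhs => rw [← image_const_mul_Ioi_zero hc]
  rw [lintegral_image_eq_lintegral_abs_deriv_mul measurableSet_Ioi hderiv
      (mul_right_injective₀ hc.ne').injOn, abs_of_pos hc,
    lintegral_const_mul' _ _ ENNReal.ofReal_ne_top]

def priceWeight (ψ : ℝ × ℝ → ℝ) (p : ℝ) : ℝ≥0∞ :=
  ∫⁻ t in Ioi 0, ENNReal.ofReal (ψ (p * t, t))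

theorem measurable_priceWeight {ψ : ℝ × ℝ → ℝ} (hψ : Measurable ψ) :
    Measurable (priceWeight ψ) :=
  Measurable.lintegral_prod_right' (f := fun q : ℝ × ℝ => ENNReal.ofReal (ψ (q.1 * q.2, q.2)))
    (by fun_prop)

def weightedIneff (w : ℝ → ℝ≥0∞) (M : ℝ → ℝ) : ℝ≥0∞ :=
  ∫⁻ p in Ioi 0, w p / ENNReal.ofReal (M p)

theorem ineff_eq_weightedIneff {ψ : ℝ × ℝ → ℝ} {L : ℝ → ℝ} (hψ : Measurable ψ)
    (hL : Measurable L) : Ineff ψ L = weightedIneff (priceWeight ψ) L := by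
  rw [Ineff, orth, Measure.volume_eq_prod, ← Measure.prod_restrict,
    lintegral_prod_symm _ (by fun_prop)]
  calc ∫⁻ y in Ioi 0, ∫⁻ x in Ioi 0, ENNReal.ofReal (ψ (x, y)) / ENNReal.ofReal (y * L (x / y))
      = ∫⁻ y in Ioi 0, ∫⁻ p in Ioi 0, ENNReal.ofReal (ψ (p * y, y)) / ENNReal.ofReal (L p) := by
        refine setLIntegral_congr_fun measurableSet_Ioi fun y (hy : 0 < y) => ?_
        rw [← ofReal_mul_setLIntegral_comp_mul_left_Ioi_zero hy,
          ← lintegral_const_mul' _ _ ENNReal.ofReal_ne_top]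
        refine lintegral_congr fun p => ?_
        rw [mul_div_cancel_left₀ _ hy.ne', ENNReal.ofReal_mul hy.le, mul_comm y p, ← mul_div_assoc,
          ENNReal.mul_div_mul_left _ _ (ENNReal.ofReal_pos.2 hy).ne' ENNReal.ofReal_ne_top]
    _ = ∫⁻ p in Ioi 0, ∫⁻ y in Ioi 0, ENNReal.ofReal (ψ (p * y, y)) / ENNReal.ofReal (L p) :=
        lintegral_lintegral_swap (by fun_prop)
    _ = weightedIneff (priceWeight ψ) L := by
        simp_rw [div_eq_mul_inv]
        exact lintegral_congr fun p => lintegral_mul_const'' _ (by fun_prop)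

theorem sin_arccot_pos (p : ℝ) : 0 < sin (arccot p) := by
  rw [arccot, sin_pi_div_two_sub]
  exact cos_arctan_pos p

theorem cos_arccot_s11 (p : ℝ) : cos (arccot p) = p * sin (arccot p) := by
  rw [arccot, cos_pi_div_two_sub, sin_pi_div_two_sub, sin_arctan, cos_arctan, mul_one_div]

theorem priceWeight_eq_ofReal_sin_mul_phiAng (ψ : ℝ × ℝ → ℝ) (p : ℝ) :
    priceWeight ψ p = ENNReal.ofReal (sin (arccot p)) * phiAng ψ (arccot p) := by
  rw [priceWeight, ← ofReal_mul_setLIntegral_comp_mul_left_Ioi_zero (sin_arccot_pos p), phiAng,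
    cos_arccot_s11]
  congr 1
  refine lintegral_congr fun r => ?_
  congr 3 <;> ring

theorem priceWeight_eq_zero_iff (ψ : ℝ × ℝ → ℝ) (p : ℝ) :
    priceWeight ψ p = 0 ↔ phiAng ψ (arccot p) = 0 := by
  simp [priceWeight_eq_ofReal_sin_mul_phiAng, ENNReal.ofReal_eq_zero, (sin_arccot_pos p).not_ge]

theorem arccot_mem_Ioo {p : ℝ} (hp : 0 < p) : arccot p ∈ Ioo 0 (π / 2) := by
  have := arctan_lt_pi_div_two p
  have := arctan_pos.2 hp
  constructor <;> simp only [arccot] <;> linarith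

theorem measure_preimage_arccot_eq_zero {S : Set ℝ} (hS : volume S = 0) :
    volume (arccot ⁻¹' S) = 0 := by
  have hcot : DifferentiableOn ℝ (fun θ => tan (π / 2 - θ)) (S ∩ Ioo 0 π) := fun θ hθ => by
    have hcos : cos (π / 2 - θ) ≠ 0 := by
      rw [cos_pi_div_two_sub]
      exact (sin_pos_of_pos_of_lt_pi hθ.2.1 hθ.2.2).ne'
    exact ((differentiableAt_tan.2 hcos).comp θ
      ((differentiableAt_const _).sub differentiableAt_id)).differentiableWithinAt
  have hsub : arccot ⁻¹' S ⊆ (fun θ => tan (π / 2 - θ)) '' (S ∩ Ioo 0 π) := fun p hp =>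
    ⟨arccot p, ⟨hp, by unfold arccot; linarith [arctan_lt_pi_div_two p],
      by unfold arccot; linarith [neg_pi_div_two_lt_arctan p]⟩, by simp [arccot, tan_arctan]⟩
  exact measure_mono_null hsub (addHaar_image_eq_zero_of_differentiableOn_of_addHaar_eq_zero
    volume hcot (measure_mono_null inter_subset_left hS))

def priceSupport (ψ : ℝ × ℝ → ℝ) : Set ℝ := {p | 0 < p ∧ priceWeight ψ p ≠ 0}

theorem volume_priceSupport_inter_eq_zero {ψ₁ ψ₂ : ℝ × ℝ → ℝ}
    (hdisj : volume {θ ∈ Ioo 0 (π / 2) | phiAng ψ₁ θ ≠ 0 ∧ phiAng ψ₂ θ ≠ 0} = 0) :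
    volume (priceSupport ψ₁ ∩ priceSupport ψ₂) = 0 := by
  refine measure_mono_null (fun p ⟨⟨hp, h₁⟩, ⟨_, h₂⟩⟩ => ?_) (measure_preimage_arccot_eq_zero hdisj)
  exact ⟨arccot_mem_Ioo hp, (priceWeight_eq_zero_iff ψ₁ p).not.1 h₁,
    (priceWeight_eq_zero_iff ψ₂ p).not.1 h₂⟩

theorem div_ofReal_add_div_ofReal_div_two (W : ℝ≥0∞) {x y : ℝ} (hx : 0 < x) (hy : 0 < y) :
    (W / ENNReal.ofReal x + W / ENNReal.ofReal y) / 2 = W * ENNReal.ofReal ((x⁻¹ + y⁻¹) / 2) := by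
  rw [ENNReal.ofReal_div_of_pos two_pos, ENNReal.ofReal_add (inv_nonneg.2 hx.le)
    (inv_nonneg.2 hy.le), ENNReal.ofReal_inv_of_pos hx, ENNReal.ofReal_inv_of_pos hy,
    ENNReal.ofReal_ofNat, div_eq_mul_inv W, div_eq_mul_inv W, ← mul_add, mul_div_assoc]

theorem div_ofReal_midpoint_le (W : ℝ≥0∞) {x y : ℝ} (hx : 0 < x) (hy : 0 < y) :
    W / ENNReal.ofReal ((x + y) / 2) ≤ (W / ENNReal.ofReal x + W / ENNReal.ofReal y) / 2 := by
  rw [div_ofReal_add_div_ofReal_div_two W hx hy, div_eq_mul_inv W,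
    ← ENNReal.ofReal_inv_of_pos (by positivity)]
  gcongr
  rw [inv_div, div_le_div_iff₀ (by positivity) two_pos, inv_add_inv hx.ne' hy.ne',
    div_mul_eq_mul_div, le_div_iff₀ (by positivity)]
  nlinarith [sq_nonneg (x - y)]

theorem eq_of_div_ofReal_add_div_ofReal_div_two_le {W : ℝ≥0∞} (hW₀ : W ≠ 0) (hW : W ≠ ⊤)
    {x y : ℝ} (hx : 0 < x) (hy : 0 < y)
    (h : (W / ENNReal.ofReal x + W / ENNReal.ofReal y) / 2 ≤ W / ENNReal.ofReal ((x + y) / 2)) :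
    x = y := by
  rw [div_ofReal_add_div_ofReal_div_two W hx hy, div_eq_mul_inv W,
    ← ENNReal.ofReal_inv_of_pos (by positivity), ENNReal.mul_le_mul_iff_right hW₀ hW,
    ENNReal.ofReal_le_ofReal_iff (by positivity), inv_div, div_le_div_iff₀ two_pos (by positivity),
    inv_add_inv hx.ne' hy.ne', div_mul_eq_mul_div, div_le_iff₀ (by positivity)] at h
  nlinarith [sq_nonneg (x - y)]

section weightedIneff

variable {w : ℝ → ℝ≥0∞} {M M' : ℝ → ℝ}

theorem weightedIneff_anti_ae (h : ∀ᵐ p ∂volume.restrict (Ioi 0), M p ≤ M' p) :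
    weightedIneff w M' ≤ weightedIneff w M :=
  lintegral_mono_ae (h.mono fun _ hp => ENNReal.div_le_div_left (ENNReal.ofReal_le_ofReal hp) _)

theorem weightedIneff_congr (h : ∀ p, 0 < p → w p ≠ 0 → M p = M' p) :
    weightedIneff w M = weightedIneff w M' := by
  refine setLIntegral_congr_fun measurableSet_Ioi fun p hp => ?_
  by_cases hw : w p = 0
  · simp [hw]
  · rw [h p hp hw]

theorem weightedIneff_const_mul {c : ℝ} (hc : 0 < c) :
    weightedIneff w (fun p => c * M p) = (ENNReal.ofReal c)⁻¹ * weightedIneff w M := by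
  rw [weightedIneff, weightedIneff,
    ← lintegral_const_mul' _ _ (ENNReal.inv_ne_top.2 (ENNReal.ofReal_pos.2 hc).ne')]
  refine lintegral_congr fun p => ?_
  rw [ENNReal.ofReal_mul hc.le, div_eq_mul_inv, div_eq_mul_inv,
    ENNReal.mul_inv (Or.inr ENNReal.ofReal_ne_top) (Or.inl ENNReal.ofReal_ne_top)]
  ring

theorem ae_eq_of_weightedIneff_midpoint_ge (hw : Measurable w)
    (hM : Measurable M) (hM' : Measurable M') (hfin : weightedIneff w M ≠ ⊤)
    (hM'M : weightedIneff w M' ≤ weightedIneff w M)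
    (hmid : weightedIneff w M ≤ weightedIneff w (fun p => (M p + M' p) / 2)) :
    ∀ᵐ p ∂volume.restrict (Ioi 0), w p ≠ 0 → M p = M' p := by
  have hgood : ∀ᵐ p ∂volume.restrict (Ioi 0), w p ≠ 0 → w p ≠ ⊤ ∧ 0 < M p ∧ 0 < M' p := by
    filter_upwards [ae_lt_top (by fun_prop) hfin,
      ae_lt_top (by fun_prop) (hM'M.trans_lt hfin.lt_top).ne] with p h h' hw₀
    simp_all [lt_top_iff_ne_top, ENNReal.div_eq_top, ENNReal.ofReal_eq_zero]
  have hconvex : ∀ᵐ p ∂volume.restrict (Ioi 0), w p / ENNReal.ofReal ((M p + M' p) / 2) ≤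
      (w p / ENNReal.ofReal (M p) + w p / ENNReal.ofReal (M' p)) / 2 := by
    filter_upwards [hgood] with p hp
    by_cases hw₀ : w p = 0
    · simp [hw₀]
    · exact div_ofReal_midpoint_le _ (hp hw₀).2.1 (hp hw₀).2.2
  have havg : ∫⁻ p in Ioi 0, (w p / ENNReal.ofReal (M p) + w p / ENNReal.ofReal (M' p)) / 2 =
      (weightedIneff w M + weightedIneff w M') / 2 := by
    simp_rw [div_eq_mul_inv _ (2 : ℝ≥0∞)]
    rw [lintegral_mul_const'' _ (by fun_prop), lintegral_add_left (by fun_prop), weightedIneff,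
      weightedIneff]
  have havg_le : (weightedIneff w M + weightedIneff w M') / 2 ≤ weightedIneff w M := by
    calc (weightedIneff w M + weightedIneff w M') / 2
        ≤ (weightedIneff w M + weightedIneff w M) / 2 := by gcongr
      _ = weightedIneff w M := by rw [ENNReal.add_div, ENNReal.add_halves]
  have heq := ae_eq_of_ae_le_of_lintegral_le hconvex
    ((lintegral_mono_ae hconvex).trans_lt (havg ▸ havg_le.trans_lt hfin.lt_top)).ne
    (by fun_prop) (havg ▸ havg_le.trans hmid)
  filter_upwards [heq, hgood] with p hp hgood hw₀
  obtain ⟨hw, hx, hy⟩ := hgood hw₀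
  exact eq_of_div_ofReal_add_div_ofReal_div_two_le hw₀ hw hx hy hp.ge

end weightedIneff

section lintegralOfRealDiv

variable {μ : Measure ℝ} {g M : ℝ → ℝ}

theorem lintegral_ofReal_const_mul_div {c : ℝ} (hc : 0 ≤ c) :
    ∫⁻ p, ENNReal.ofReal (c * M p / g p) ∂μ =
      ENNReal.ofReal c * ∫⁻ p, ENNReal.ofReal (M p / g p) ∂μ := by
  simp_rw [mul_div_assoc, ENNReal.ofReal_mul hc]
  exact lintegral_const_mul' _ _ ENNReal.ofReal_ne_top

theorem lintegral_ofReal_indicator_div_add_le {A₁ A₂ : Set ℝ} (hA : ∀ᵐ p ∂μ, p ∉ A₁ ∩ A₂) :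
    ∫⁻ p, ENNReal.ofReal (A₁.indicator M p / g p) ∂μ +
        ∫⁻ p, ENNReal.ofReal (A₂.indicator M p / g p) ∂μ ≤
      ∫⁻ p, ENNReal.ofReal (M p / g p) ∂μ := by
  refine (le_lintegral_add _ _).trans (lintegral_mono_ae (hA.mono fun p hp => ?_))
  by_cases h₁ : p ∈ A₁ <;> by_cases h₂ : p ∈ A₂ <;> simp_all

theorem lintegral_ofReal_add_div_le {M' : ℝ → ℝ} {a b X X' : ℝ} (hM : Measurable M)
    (hg : Measurable g) (ha : 0 ≤ a) (hb : 0 ≤ b) (hX : 0 ≤ X) (hX' : 0 ≤ X')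
    (h : ∫⁻ p, ENNReal.ofReal (M p / g p) ∂μ ≤ ENNReal.ofReal X)
    (h' : ∫⁻ p, ENNReal.ofReal (M' p / g p) ∂μ ≤ ENNReal.ofReal X') :
    ∫⁻ p, ENNReal.ofReal ((a * M p + b * M' p) / g p) ∂μ ≤ ENNReal.ofReal (a * X + b * X') := by
  calc ∫⁻ p, ENNReal.ofReal ((a * M p + b * M' p) / g p) ∂μ
      ≤ ∫⁻ p, (ENNReal.ofReal (a * M p / g p) + ENNReal.ofReal (b * M' p / g p)) ∂μ :=
        lintegral_mono fun p => by rw [add_div]; exact ENNReal.ofReal_add_le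
    _ = ENNReal.ofReal a * ∫⁻ p, ENNReal.ofReal (M p / g p) ∂μ +
          ENNReal.ofReal b * ∫⁻ p, ENNReal.ofReal (M' p / g p) ∂μ := by
        rw [lintegral_add_left (by fun_prop), lintegral_ofReal_const_mul_div ha,
          lintegral_ofReal_const_mul_div hb]
    _ ≤ ENNReal.ofReal a * ENNReal.ofReal X + ENNReal.ofReal b * ENNReal.ofReal X' := by gcongr
    _ = ENNReal.ofReal (a * X + b * X') := by
        rw [ENNReal.ofReal_add (by positivity) (by positivity), ENNReal.ofReal_mul ha,
          ENNReal.ofReal_mul hb]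

theorem ae_eq_zero_of_lintegral_ofReal_div_eq_zero (hM : Measurable M) (hg : Measurable g)
    (hM₀ : ∀ᵐ p ∂μ, 0 ≤ M p) (hg₀ : ∀ᵐ p ∂μ, 0 < g p)
    (h : ∫⁻ p, ENNReal.ofReal (M p / g p) ∂μ = 0) : ∀ᵐ p ∂μ, M p = 0 := by
  filter_upwards [(lintegral_eq_zero_iff (by fun_prop)).1 h, hM₀, hg₀] with p hp hM₀ hg₀
  have hle : M p / g p ≤ 0 := ENNReal.ofReal_eq_zero.1 hp
  rw [div_le_iff₀ hg₀, zero_mul] at hle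
  exact le_antisymm hle hM₀

end lintegralOfRealDiv

/-- The budget `P_X·X₀ + P_Y·Y₀` for the least reserves `X₀`, `Y₀` that fund the allocation `M`. -/
def reserveCost (PX PY : ℝ) (M : ℝ → ℝ) : ℝ≥0∞ :=
  ENNReal.ofReal PX * (∫⁻ p in Ioi (PX / PY), ENNReal.ofReal (M p / p ^ 2)) +
    ENNReal.ofReal PY * ∫⁻ p in Ioc 0 (PX / PY), ENNReal.ofReal (M p / p)

section reserveCost

variable {PX PY B : ℝ} {M : ℝ → ℝ}

theorem reserveCost_const_mul {c : ℝ} (hc : 0 ≤ c) :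
    reserveCost PX PY (fun p => c * M p) = ENNReal.ofReal c * reserveCost PX PY M := by
  simp only [reserveCost, lintegral_ofReal_const_mul_div hc]
  ring

theorem reserveCost_indicator_add_le {A₁ A₂ : Set ℝ} (hA : volume (A₁ ∩ A₂) = 0) :
    reserveCost PX PY (A₁.indicator M) + reserveCost PX PY (A₂.indicator M) ≤
      reserveCost PX PY M := by
  have hA' {s : Set ℝ} : ∀ᵐ p ∂volume.restrict s, p ∉ A₁ ∩ A₂ :=
    ae_restrict_of_ae (measure_eq_zero_iff_ae_notMem.1 hA)
  simp only [reserveCost]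
  rw [add_add_add_comm, ← mul_add, ← mul_add]
  gcongr <;> exact lintegral_ofReal_indicator_div_add_le hA'

theorem Feasible.reserveCost_le {X Y : ℝ} (h : Feasible PX PY B M X Y) (hPX : 0 ≤ PX)
    (hPY : 0 ≤ PY) : reserveCost PX PY M ≤ ENNReal.ofReal B := by
  obtain ⟨-, -, hX, hY, hYcost, hXcost, hbudget⟩ := h
  calc reserveCost PX PY M
      ≤ ENNReal.ofReal PX * ENNReal.ofReal X + ENNReal.ofReal PY * ENNReal.ofReal Y := by
        unfold reserveCost; gcongr
    _ = ENNReal.ofReal (PX * X + PY * Y) := by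
        rw [ENNReal.ofReal_add (by positivity) (by positivity), ENNReal.ofReal_mul hPX,
          ENNReal.ofReal_mul hPY]
    _ ≤ ENNReal.ofReal B := ENNReal.ofReal_le_ofReal hbudget

theorem exists_feasible_of_reserveCost_le (hPX : 0 < PX) (hPY : 0 < PY) (hB : 0 ≤ B)
    (hM : Measurable M) (hM₀ : ∀ p ∈ Ioi 0, 0 ≤ M p) (h : reserveCost PX PY M ≤ ENNReal.ofReal B) :
    ∃ X Y, Feasible PX PY B M X Y := by
  set CX := ∫⁻ p in Ioi (PX / PY), ENNReal.ofReal (M p / p ^ 2)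
  set CY := ∫⁻ p in Ioc 0 (PX / PY), ENNReal.ofReal (M p / p)
  have hfin : ENNReal.ofReal PX * CX + ENNReal.ofReal PY * CY ≠ ⊤ :=
    (h.trans_lt ENNReal.ofReal_lt_top).ne
  have hCX : CX ≠ ⊤ := fun hCX => hfin (by simp [hCX, hPX])
  have hCY : CY ≠ ⊤ := fun hCY => hfin (by simp [hCY, hPY])
  refine ⟨CX.toReal, CY.toReal, hM, hM₀, ENNReal.toReal_nonneg, ENNReal.toReal_nonneg,
    (ENNReal.ofReal_toReal hCY).ge, (ENNReal.ofReal_toReal hCX).ge, ?_⟩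
  rw [← ENNReal.ofReal_le_ofReal_iff hB, ENNReal.ofReal_add (by positivity) (by positivity),
    ENNReal.ofReal_mul hPX.le, ENNReal.ofReal_mul hPY.le, ENNReal.ofReal_toReal hCX,
    ENNReal.ofReal_toReal hCY]
  exact h

theorem ae_eq_zero_of_reserveCost_eq_zero (hPX : 0 < PX) (hPY : 0 < PY) (hM : Measurable M)
    (hM₀ : ∀ p ∈ Ioi 0, 0 ≤ M p) (h : reserveCost PX PY M = 0) :
    ∀ᵐ p ∂volume.restrict (Ioi 0), M p = 0 := by
  have hp₀ : 0 < PX / PY := by positivity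
  simp only [reserveCost, add_eq_zero, mul_eq_zero, ENNReal.ofReal_eq_zero, not_le.2 hPX,
    not_le.2 hPY, false_or] at h
  rw [← Ioc_union_Ioi_eq_Ioi hp₀.le, ae_restrict_union_iff]
  refine ⟨ae_eq_zero_of_lintegral_ofReal_div_eq_zero hM measurable_id ?_ ?_ h.2,
    ae_eq_zero_of_lintegral_ofReal_div_eq_zero hM (by fun_prop) ?_ ?_ h.1⟩
  · exact (ae_restrict_mem measurableSet_Ioc).mono fun p hp => hM₀ p hp.1
  · exact (ae_restrict_mem measurableSet_Ioc).mono fun p hp => hp.1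
  · exact (ae_restrict_mem measurableSet_Ioi).mono fun p hp => hM₀ p (hp₀.trans hp)
  · exact (ae_restrict_mem measurableSet_Ioi).mono fun p hp => by
      have : 0 < p := hp₀.trans hp
      positivity

theorem Feasible.convex_comb {L L' : ℝ → ℝ} {X Y X' Y' a b : ℝ} (h : Feasible PX PY B L X Y)
    (h' : Feasible PX PY B L' X' Y') (ha : 0 ≤ a) (hb : 0 ≤ b) (hab : a + b ≤ 1) (hB : 0 ≤ B) :
    Feasible PX PY B (fun p => a * L p + b * L' p) (a * X + b * X') (a * Y + b * Y') := by
  obtain ⟨hL, hL₀, hX, hY, hYcost, hXcost, hbudget⟩ := h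
  obtain ⟨hL', hL'₀, hX', hY', hYcost', hXcost', hbudget'⟩ := h'
  refine ⟨by fun_prop, fun p hp => ?_, by positivity, by positivity,
    lintegral_ofReal_add_div_le hL measurable_id ha hb hY hY' hYcost hYcost',
    lintegral_ofReal_add_div_le hL (by fun_prop) ha hb hX hX' hXcost hXcost', by nlinarith⟩
  have := hL₀ p hp
  have := hL'₀ p hp
  positivity

end reserveCost

theorem measurableSet_priceSupport {ψ : ℝ × ℝ → ℝ} (hψ : Measurable ψ) :
    MeasurableSet (priceSupport ψ) :=
  measurableSet_Ioi.inter (measurable_priceWeight hψ (measurableSet_singleton 0).compl)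

theorem ineff_add {ψ₁ ψ₂ : ℝ × ℝ → ℝ} {M : ℝ → ℝ} (hψ₁ : Measurable ψ₁) (hψ₁₀ : ∀ q, 0 ≤ ψ₁ q)
    (hψ₂₀ : ∀ q, 0 ≤ ψ₂ q) (hM : Measurable M) :
    Ineff (fun q => ψ₁ q + ψ₂ q) M = Ineff ψ₁ M + Ineff ψ₂ M := by
  simp only [Ineff, ENNReal.ofReal_add (hψ₁₀ _) (hψ₂₀ _), ENNReal.add_div]
  exact lintegral_add_left (by fun_prop) _

theorem phiAng_add {ψ₁ ψ₂ : ℝ × ℝ → ℝ} (hψ₁ : Measurable ψ₁) (hψ₁₀ : ∀ q, 0 ≤ ψ₁ q)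
    (hψ₂₀ : ∀ q, 0 ≤ ψ₂ q) (θ : ℝ) :
    phiAng (fun q => ψ₁ q + ψ₂ q) θ = phiAng ψ₁ θ + phiAng ψ₂ θ := by
  simp only [phiAng, ENNReal.ofReal_add (hψ₁₀ _) (hψ₂₀ _)]
  exact lintegral_add_left (by fun_prop) _

def budgetShare (PX PY B : ℝ) (ψ : ℝ × ℝ → ℝ) (L : ℝ → ℝ) : ℝ :=
  (reserveCost PX PY ((priceSupport ψ).indicator L)).toReal / B

section optimal

variable {PX PY B : ℝ} {ψ : ℝ × ℝ → ℝ} {Lψ L L' : ℝ → ℝ} {X Y : ℝ}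

theorem budgetShare_add_le_one {ψ₁ ψ₂ : ℝ × ℝ → ℝ} (hB : 0 < B)
    (h : reserveCost PX PY ((priceSupport ψ₁).indicator L) +
      reserveCost PX PY ((priceSupport ψ₂).indicator L) ≤ ENNReal.ofReal B) :
    budgetShare PX PY B ψ₁ L + budgetShare PX PY B ψ₂ L ≤ 1 := by
  obtain ⟨h₁, h₂⟩ := ENNReal.add_ne_top.1 (h.trans_lt ENNReal.ofReal_lt_top).ne
  rw [budgetShare, budgetShare, ← add_div, ← ENNReal.toReal_add h₁ h₂, div_le_one hB]
  exact ENNReal.toReal_le_of_le_ofReal hB.le h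

theorem IsOptimal.weightedIneff_mul_le {M : ℝ → ℝ} (hopt : IsOptimal PX PY B ψ Lψ X Y)
    (hPX : 0 < PX) (hPY : 0 < PY) (hB : 0 < B) (hψ : Measurable ψ) (hM : Measurable M)
    (hM₀ : ∀ p ∈ Ioi 0, 0 ≤ M p) (hMB : reserveCost PX PY M ≤ ENNReal.ofReal B) :
    weightedIneff (priceWeight ψ) (fun p => (reserveCost PX PY M).toReal / B * Lψ p) ≤
      weightedIneff (priceWeight ψ) M := by
  set c := (reserveCost PX PY M).toReal / B
  have hcost : ENNReal.ofReal (c * B) = reserveCost PX PY M := by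
    rw [div_mul_cancel₀ _ hB.ne', ENNReal.ofReal_toReal (hMB.trans_lt ENNReal.ofReal_lt_top).ne]
  rcases (show 0 ≤ c by positivity).eq_or_lt with hc | hc
  · have hM0 := ae_eq_zero_of_reserveCost_eq_zero hPX hPY hM hM₀
      (by rw [← hcost, ← hc, zero_mul, ENNReal.ofReal_zero])
    exact weightedIneff_anti_ae (hM0.mono fun p hp => by simp [hp, ← hc])
  · -- `M` rescaled to the full budget competes with `Lψ`.
    obtain ⟨X', Y', hfeas⟩ := exists_feasible_of_reserveCost_le hPX hPY hB.le
      (M := fun p => c⁻¹ * M p) (by fun_prop) (fun p hp => mul_nonneg (by positivity) (hM₀ p hp))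
      (by rw [reserveCost_const_mul (by positivity), ← hcost, ← ENNReal.ofReal_mul (by positivity),
        inv_mul_cancel_left₀ hc.ne'])
    have hopt' := hopt.2 _ _ _ hfeas
    rw [ineff_eq_weightedIneff hψ hopt.1.1, ineff_eq_weightedIneff hψ (by fun_prop),
      weightedIneff_const_mul (inv_pos.2 hc)] at hopt'
    rw [weightedIneff_const_mul hc]
    calc (ENNReal.ofReal c)⁻¹ * weightedIneff (priceWeight ψ) Lψ
        ≤ (ENNReal.ofReal c)⁻¹ * ((ENNReal.ofReal c⁻¹)⁻¹ * weightedIneff (priceWeight ψ) M) := by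
          gcongr
      _ = weightedIneff (priceWeight ψ) M := by
          rw [ENNReal.ofReal_inv_of_pos hc, inv_inv, ← mul_assoc,
            ENNReal.inv_mul_cancel (ENNReal.ofReal_pos.2 hc).ne' ENNReal.ofReal_ne_top, one_mul]

theorem IsOptimal.ineff_le (hopt : IsOptimal PX PY B ψ Lψ X Y) (hPX : 0 < PX) (hPY : 0 < PY)
    (hB : 0 < B) (hψ : Measurable ψ) (hL : Measurable L) (hL₀ : ∀ p ∈ Ioi 0, 0 ≤ L p)
    (hL' : Measurable L')
    (hcost : reserveCost PX PY ((priceSupport ψ).indicator L) ≤ ENNReal.ofReal B)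
    (hle : ∀ p ∈ Ioi 0, budgetShare PX PY B ψ L * Lψ p ≤ L' p) :
    Ineff ψ L' ≤ Ineff ψ L := by
  have hind₀ : ∀ p ∈ Ioi 0, 0 ≤ (priceSupport ψ).indicator L p := fun p hp =>
    indicator_apply_nonneg fun _ => hL₀ p hp
  rw [ineff_eq_weightedIneff hψ hL', ineff_eq_weightedIneff hψ hL]
  calc weightedIneff (priceWeight ψ) L'
      ≤ weightedIneff (priceWeight ψ) (fun p => budgetShare PX PY B ψ L * Lψ p) :=
        weightedIneff_anti_ae ((ae_restrict_mem measurableSet_Ioi).mono hle)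
    _ ≤ weightedIneff (priceWeight ψ) ((priceSupport ψ).indicator L) :=
        hopt.weightedIneff_mul_le hPX hPY hB hψ (hL.indicator (measurableSet_priceSupport hψ))
          hind₀ hcost
    _ = weightedIneff (priceWeight ψ) L :=
        weightedIneff_congr fun p hp hw =>
          indicator_of_mem (show p ∈ priceSupport ψ from ⟨hp, hw⟩) L

theorem IsOptimal.ae_eq_of_ineff_le {X' Y' : ℝ} (hopt : IsOptimal PX PY B ψ L X Y) (hB : 0 ≤ B)
    (hψ : Measurable ψ) (hfin : Ineff ψ L ≠ ⊤) (hL' : Feasible PX PY B L' X' Y')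
    (hle : Ineff ψ L' ≤ Ineff ψ L) :
    ∀ᵐ p, 0 < p → phiAng ψ (arccot p) ≠ 0 → L p = L' p := by
  have hL := hopt.1.1
  have hL'm := hL'.1
  have hmid := hopt.2 _ _ _ (hopt.1.convex_comb hL' (a := 1 / 2) (b := 1 / 2) (by norm_num)
    (by norm_num) (by norm_num) hB)
  have hmid_eq : (fun p => 1 / 2 * L p + 1 / 2 * L' p) = fun p => (L p + L' p) / 2 := by
    ext p
    ring
  rw [hmid_eq, ineff_eq_weightedIneff hψ hL, ineff_eq_weightedIneff hψ (by fun_prop)] at hmid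
  rw [ineff_eq_weightedIneff hψ hL] at hfin hle
  rw [ineff_eq_weightedIneff hψ hL'm] at hle
  have hae := ae_eq_of_weightedIneff_midpoint_ge (measurable_priceWeight hψ) hL hL'm hfin hle hmid
  rw [ae_restrict_iff' measurableSet_Ioi] at hae
  filter_upwards [hae] with p hp hp₀ hφ
  exact hp hp₀ ((priceWeight_eq_zero_iff ψ p).not.2 hφ)

end optimal

theorem stmt_11 (PX PY B : ℝ) (hPX : 0 < PX) (hPY : 0 < PY) (hB : 0 < B)
    (ψ₁ ψ₂ : ℝ × ℝ → ℝ)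
    (hψ₁meas : Measurable ψ₁) (hψ₁nn : ∀ q, 0 ≤ ψ₁ q)
    (hψ₂meas : Measurable ψ₂) (hψ₂nn : ∀ q, 0 ≤ ψ₂ q)
    (hdisj : volume {θ ∈ Set.Ioo (0:ℝ) (Real.pi / 2) |
        phiAng ψ₁ θ ≠ 0 ∧ phiAng ψ₂ θ ≠ 0} = 0)
    (L₁ L₂ L : ℝ → ℝ) (X₁ Y₁ X₂ Y₂ X0 Y0 : ℝ)
    (hopt₁ : IsOptimalEq PX PY B ψ₁ L₁ X₁ Y₁)
    (hopt₂ : IsOptimalEq PX PY B ψ₂ L₂ X₂ Y₂)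
    (hopt : IsOptimalEq PX PY B (fun q => ψ₁ q + ψ₂ q) L X0 Y0) :
    ∃ a b : ℝ, 0 ≤ a ∧ 0 ≤ b ∧
      ∀ᵐ p ∂(volume : Measure ℝ),
        (p ∈ Set.Ioi (0:ℝ) ∧ phiAng ψ₁ (arccot p) + phiAng ψ₂ (arccot p) ≠ 0) →
          L p = a * L₁ p + b * L₂ p := by
  have hL := hopt.1.1
  set a := budgetShare PX PY B ψ₁ L
  set b := budgetShare PX PY B ψ₂ L
  have ha : 0 ≤ a := div_nonneg ENNReal.toReal_nonneg hB.le
  have hb : 0 ≤ b := div_nonneg ENNReal.toReal_nonneg hB.le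
  have hsplit :=
    (reserveCost_indicator_add_le (M := L) (volume_priceSupport_inter_eq_zero hdisj)).trans
      (hL.reserveCost_le hPX.le hPY.le)
  have hfeas := hopt₁.1.1.convex_comb hopt₂.1.1 ha hb (budgetShare_add_le_one hB hsplit) hB.le
  have hle : Ineff (fun q => ψ₁ q + ψ₂ q) (fun p => a * L₁ p + b * L₂ p) ≤
      Ineff (fun q => ψ₁ q + ψ₂ q) L := by
    rw [ineff_add hψ₁meas hψ₁nn hψ₂nn hfeas.1, ineff_add hψ₁meas hψ₁nn hψ₂nn hL.1]
    exact add_le_add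
      (hopt₁.1.ineff_le hPX hPY hB hψ₁meas hL.1 hL.2.1 hfeas.1 (le_self_add.trans hsplit)
        fun p hp => le_add_of_nonneg_right (mul_nonneg hb (hopt₂.1.1.2.1 p hp)))
      (hopt₂.1.ineff_le hPX hPY hB hψ₂meas hL.1 hL.2.1 hfeas.1 (le_add_self.trans hsplit)
        fun p hp => le_add_of_nonneg_left (mul_nonneg ha (hopt₁.1.1.2.1 p hp)))
  refine ⟨a, b, ha, hb, ?_⟩
  filter_upwards [hopt.1.ae_eq_of_ineff_le hB.le (hψ₁meas.add hψ₂meas) hopt.2.2.2.2.ne hfeas hle]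
    with p hp ⟨hp₀, hφ⟩
  exact hp hp₀ (by rwa [phiAng_add hψ₁meas hψ₁nn hψ₂nn])
end
end

section
/- Fix reference prices P_X, P_Y > 0, p₀ = P_X/P_Y, budget B > 0, and a weight α > 0. Let ψ(p_X, p_Y) = (p_X/p_Y)^{(α−1)/(α+1)} for (p_X, p_Y) ∈ (0, P_X] × (0, P_Y] and 0 otherwise. Then there exists c > 0 such that, with L(p) = c·p^{α/(α+1)} for p > 0 (the liquidity allocation implied by the weighted product trading function f(x, y) = x^α·y), Y₀ = ∫₀^{p₀} L(p)/p dp = c·((α+1)/α)·p₀^{α/(α+1)}, X₀ = ∫_{p₀}^∞ L(p)/p² dp = c·(α+1)·p₀^{−1/(α+1)}, and P_X·X₀ + P_Y·Y₀ = B, the triple (L, X₀, Y₀) is optimal for ψ. -/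
open MeasureTheory Set
open scoped ENNReal

noncomputable section

/-!
Substituting `p = p_X / p_Y` and integrating out `p_Y` turns the inefficiency into
`∫_{p > 0} a(p) / L(p) dp` with `a(p) = min(P_Y, P_X / p) · p^γ`, and the budget constraint into
`∫_{p > 0} k(p) L(p) dp ≤ B` with `k(p) = min(P_Y, P_X / p) / p`. For `L(p) = c · p^β` with
`β = α / (α + 1)` one has `γ = 2β - 1`, hence `a = c⁻² k L²`. The tangent line of the convex
function `t ↦ a / t` at `t = L` then reads `a / L' ≥ 2 a / L - c⁻² k L'`; integrating it and
using `∫ k L' ≤ B = ∫ k L` gives `I_ψ(L) ≤ I_ψ(L')`.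
-/

theorem lintegral_Ioc_rpow {s t : ℝ} (hs : -1 < s) (ht : 0 < t) :
    ∫⁻ p in Ioc 0 t, ENNReal.ofReal (p ^ s) = ENNReal.ofReal (t ^ (s + 1) / (s + 1)) := by
  have hint : IntegrableOn (fun p : ℝ => p ^ s) (Ioc 0 t) :=
    ((intervalIntegral.integrableOn_Ioo_rpow_iff ht).2 hs).congr_set_ae Ioo_ae_eq_Ioc.symm
  rw [← ofReal_integral_eq_lintegral_ofReal hint
      (ae_restrict_of_forall_mem measurableSet_Ioc fun p hp => Real.rpow_nonneg hp.1.le s),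
    ← intervalIntegral.integral_of_le ht.le, integral_rpow (Or.inl hs),
    Real.zero_rpow (by linarith), sub_zero]

theorem lintegral_Ioi_rpow {s t : ℝ} (hs : s < -1) (ht : 0 < t) :
    ∫⁻ p in Ioi t, ENNReal.ofReal (p ^ s) = ENNReal.ofReal (-t ^ (s + 1) / (s + 1)) := by
  rw [← ofReal_integral_eq_lintegral_ofReal (integrableOn_Ioi_rpow_of_lt hs ht)
      (ae_restrict_of_forall_mem measurableSet_Ioi fun p hp => Real.rpow_nonneg (ht.trans hp).le s),
    integral_Ioi_rpow_of_lt hs ht]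

theorem lintegral_Ioc_mul_rpow_div {c β t : ℝ} (hc : 0 ≤ c) (hβ : 0 < β) (ht : 0 < t) :
    ∫⁻ p in Ioc 0 t, ENNReal.ofReal (c * p ^ β / p) = ENNReal.ofReal (c * (t ^ β / β)) := by
  have hp : ∀ p ∈ Ioc 0 t, ENNReal.ofReal (c * p ^ β / p)
      = ENNReal.ofReal c * ENNReal.ofReal (p ^ (β - 1)) := fun p hp => by
    rw [← ENNReal.ofReal_mul hc, Real.rpow_sub_one hp.1.ne', mul_div_assoc]
  rw [setLIntegral_congr_fun measurableSet_Ioc hp, lintegral_const_mul' _ _ ENNReal.ofReal_ne_top,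
    lintegral_Ioc_rpow (by linarith) ht, sub_add_cancel, ← ENNReal.ofReal_mul hc]

theorem lintegral_Ioi_mul_rpow_div_sq {c β t : ℝ} (hc : 0 ≤ c) (hβ : β < 1) (ht : 0 < t) :
    ∫⁻ p in Ioi t, ENNReal.ofReal (c * p ^ β / p ^ 2)
      = ENNReal.ofReal (c * (t ^ (β - 1) / (1 - β))) := by
  have hp : ∀ p ∈ Ioi t, ENNReal.ofReal (c * p ^ β / p ^ 2)
      = ENNReal.ofReal c * ENNReal.ofReal (p ^ (β - 2)) := fun p hp => by
    rw [← ENNReal.ofReal_mul hc, Real.rpow_sub (ht.trans hp), Real.rpow_two, mul_div_assoc]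
  rw [setLIntegral_congr_fun measurableSet_Ioi hp, lintegral_const_mul' _ _ ENNReal.ofReal_ne_top,
    lintegral_Ioi_rpow (by linarith) ht, ← ENNReal.ofReal_mul hc,
    show β - 2 + 1 = β - 1 by ring, neg_div, ← div_neg, neg_sub]

theorem lintegral_Ioi_comp_mul_left {y : ℝ} (hy : 0 < y) (f : ℝ → ℝ≥0∞) :
    ∫⁻ x in Ioi 0, f x = ENNReal.ofReal y * ∫⁻ p in Ioi 0, f (y * p) := by
  have hderiv : ∀ p ∈ Ioi (0 : ℝ), HasDerivWithinAt (y * ·) y (Ioi 0) p := fun p _ => by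
    simpa using ((hasDerivAt_id p).const_mul y).hasDerivWithinAt
  conv_lhs => rw [← image_const_mul_Ioi_zero hy]
  rw [lintegral_image_eq_lintegral_abs_deriv_mul measurableSet_Ioi hderiv
      (mul_right_injective₀ hy.ne').injOn, abs_of_pos hy,
    lintegral_const_mul' _ _ ENNReal.ofReal_ne_top]

theorem lintegral_Ioi_ite_mul_le_and_le {PX PY p : ℝ} (hp : 0 < p) (a : ℝ≥0∞) :
    ∫⁻ y in Ioi 0, (if y * p ≤ PX ∧ y ≤ PY then a else 0)
      = ENNReal.ofReal (min PY (PX / p)) * a := by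
  have hind : ∀ y, (if y * p ≤ PX ∧ y ≤ PY then a else 0)
      = (Iic (min PY (PX / p))).indicator (fun _ => a) y := fun y => by
    simp only [indicator, mem_Iic, le_min_iff, le_div_iff₀ hp, and_comm]
  simp_rw [hind]
  rw [lintegral_indicator_const measurableSet_Iic, Measure.restrict_apply measurableSet_Iic,
    inter_comm, Ioi_inter_Iic, Real.volume_Ioc, sub_zero, mul_comm]

theorem ineff_eq_lintegral {PX PY : ℝ} (hPX : 0 ≤ PX) (hPY : 0 ≤ PY) {g L : ℝ → ℝ}
    (hg : Measurable g) (hL : Measurable L) :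
    Ineff (fun q => if q.1 ∈ Ioc 0 PX ∧ q.2 ∈ Ioc 0 PY then g (q.1 / q.2) else 0) L
      = ∫⁻ p in Ioi 0, ENNReal.ofReal (min PY (PX / p) * g p) / ENNReal.ofReal (L p) := by
  set ψ : ℝ × ℝ → ℝ := fun q => if q.1 ∈ Ioc 0 PX ∧ q.2 ∈ Ioc 0 PY then g (q.1 / q.2) else 0
  set G : ℝ → ℝ≥0∞ := fun p => ENNReal.ofReal (g p) / ENNReal.ofReal (L p)
  set H : ℝ × ℝ → ℝ≥0∞ := fun q => if q.2 * q.1 ≤ PX ∧ q.2 ≤ PY then G q.1 else 0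
  have hψ : Measurable ψ := Measurable.ite
    ((measurableSet_Ioc.preimage measurable_fst).inter (measurableSet_Ioc.preimage measurable_snd))
    (by fun_prop) measurable_const
  have hH : Measurable H := Measurable.ite
    ((measurableSet_le (by fun_prop : Measurable fun q : ℝ × ℝ => q.2 * q.1)
      measurable_const).inter
      (measurableSet_le measurable_snd measurable_const)) (by fun_prop) measurable_const
  have hsubst : ∀ y > (0 : ℝ), ∀ p > (0 : ℝ), ENNReal.ofReal y *
      (ENNReal.ofReal (ψ (y * p, y)) / ENNReal.ofReal (y * L (y * p / y))) = H (p, y) := by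
    intro y hy p hp
    have hyp : 0 < y * p := mul_pos hy hp
    by_cases h : y * p ≤ PX ∧ y ≤ PY
    · simp only [ψ, H, G, mem_Ioc, hy, hyp, h, true_and, if_true,
        mul_div_cancel_left₀ p hy.ne', ENNReal.ofReal_mul hy.le, ← mul_div_assoc]
      exact ENNReal.mul_div_mul_left _ _ (by simpa using hy) ENNReal.ofReal_ne_top
    · simp only [ψ, H, mem_Ioc, hy, hyp, true_and, h, if_false,
        ENNReal.ofReal_zero, ENNReal.zero_div, mul_zero]
  calc Ineff ψ L
      = ∫⁻ y in Ioi 0, ∫⁻ x in Ioi 0,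
          ENNReal.ofReal (ψ (x, y)) / ENNReal.ofReal (y * L (x / y)) := by
        rw [Ineff, orth, Measure.volume_eq_prod, ← Measure.prod_restrict]
        exact lintegral_prod_symm _ (by fun_prop)
    _ = ∫⁻ y in Ioi 0, ∫⁻ p in Ioi 0, H (p, y) :=
        setLIntegral_congr_fun measurableSet_Ioi fun y hy => by
          rw [lintegral_Ioi_comp_mul_left hy, ← lintegral_const_mul' _ _ ENNReal.ofReal_ne_top]
          exact setLIntegral_congr_fun measurableSet_Ioi fun p hp => hsubst y hy p hp
    _ = ∫⁻ p in Ioi 0, ∫⁻ y in Ioi 0, H (p, y) :=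
        lintegral_lintegral_swap (hH.comp measurable_swap).aemeasurable
    _ = _ := setLIntegral_congr_fun measurableSet_Ioi fun p hp => by
        simp only [H]
        rw [lintegral_Ioi_ite_mul_le_and_le hp, ENNReal.ofReal_mul
          (le_min hPY (div_nonneg hPX hp.le)), mul_div_assoc]

theorem lintegral_Ioi_min_div_mul {PX PY : ℝ} (hPX : 0 < PX) (hPY : 0 < PY) (L : ℝ → ℝ) :
    ∫⁻ p in Ioi 0, ENNReal.ofReal (min PY (PX / p) / p * L p)
      = ENNReal.ofReal PY * (∫⁻ p in Ioc 0 (PX / PY), ENNReal.ofReal (L p / p))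
        + ENNReal.ofReal PX * ∫⁻ p in Ioi (PX / PY), ENNReal.ofReal (L p / p ^ 2) := by
  rw [← Ioc_union_Ioi_eq_Ioi (show (0 : ℝ) ≤ PX / PY from (div_pos hPX hPY).le),
    lintegral_union measurableSet_Ioi Ioc_disjoint_Ioi_same,
    ← lintegral_const_mul' _ _ ENNReal.ofReal_ne_top,
    ← lintegral_const_mul' _ _ ENNReal.ofReal_ne_top]
  congr 1
  · refine setLIntegral_congr_fun measurableSet_Ioc fun p hp => ?_
    have hmin : min PY (PX / p) = PY :=
      min_eq_left ((le_div_iff₀ hp.1).2 (by rw [mul_comm]; exact (le_div_iff₀ hPY).1 hp.2))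
    rw [hmin, ← ENNReal.ofReal_mul hPY.le, mul_comm_div]
  · refine setLIntegral_congr_fun measurableSet_Ioi fun p hp => ?_
    have hp0 : 0 < p := (div_pos hPX hPY).trans hp
    have hmin : min PY (PX / p) = PX / p :=
      min_eq_right ((div_le_iff₀ hp0).2 (by rw [mul_comm]; exact ((div_lt_iff₀ hPY).1 hp).le))
    rw [hmin, ← ENNReal.ofReal_mul hPX.le]
    congr 1
    field_simp

theorem Feasible.lintegral_cost_le {PX PY B X0 Y0 : ℝ} {L : ℝ → ℝ}
    (h : Feasible PX PY B L X0 Y0) (hPX : 0 < PX) (hPY : 0 < PY) :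
    ∫⁻ p in Ioi 0, ENNReal.ofReal (min PY (PX / p) / p * L p) ≤ ENNReal.ofReal B := by
  obtain ⟨-, -, hX0, hY0, hY, hX, hB⟩ := h
  calc ∫⁻ p in Ioi 0, ENNReal.ofReal (min PY (PX / p) / p * L p)
      ≤ ENNReal.ofReal PY * ENNReal.ofReal Y0 + ENNReal.ofReal PX * ENNReal.ofReal X0 := by
        rw [lintegral_Ioi_min_div_mul hPX hPY]
        exact add_le_add (mul_le_mul_right hY _) (mul_le_mul_right hX _)
    _ = ENNReal.ofReal (PX * X0 + PY * Y0) := by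
        rw [← ENNReal.ofReal_mul hPY.le, ← ENNReal.ofReal_mul hPX.le,
          ← ENNReal.ofReal_add (by positivity) (by positivity), add_comm]
    _ ≤ ENNReal.ofReal B := ENNReal.ofReal_le_ofReal hB

theorem two_mul_ofReal_div_le {a lam k m L : ℝ} (hlam : 0 ≤ lam) (hk : 0 ≤ k) (hm : 0 < m)
    (hL : 0 ≤ L) (ha : a = lam * k * m ^ 2) :
    2 * (ENNReal.ofReal a / ENNReal.ofReal m)
      ≤ ENNReal.ofReal a / ENNReal.ofReal L + ENNReal.ofReal lam * ENNReal.ofReal (k * L) := by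
  rcases hL.eq_or_lt with rfl | hL
  · rcases (show 0 ≤ a by rw [ha]; positivity).eq_or_lt with rfl | ha0
    · simp
    · simp [ENNReal.div_zero (ENNReal.ofReal_pos.2 ha0).ne']
  have hgap : a / L + lam * (k * L) - 2 * (a / m) = lam * k * (m - L) ^ 2 / L := by
    rw [ha]; field_simp; ring
  have hreal : 2 * (a / m) ≤ a / L + lam * (k * L) := by
    have : 0 ≤ lam * k * (m - L) ^ 2 / L := by positivity
    linarith
  rw [← ENNReal.ofReal_div_of_pos hm, ← ENNReal.ofReal_div_of_pos hL, ← ENNReal.ofReal_mul hlam,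
    ← ENNReal.ofReal_add (by rw [ha]; positivity) (by positivity), ← ENNReal.ofReal_ofNat 2,
    ← ENNReal.ofReal_mul zero_le_two]
  exact ENNReal.ofReal_le_ofReal hreal

theorem lintegral_div_le_of_cost_le {X : Type*} [MeasurableSpace X] {μ : Measure X}
    {a k m L : X → ℝ} {lam : ℝ} (hlam : 0 ≤ lam) (hk : AEMeasurable k μ) (hL : AEMeasurable L μ)
    (hm : ∀ᵐ x ∂μ, 0 ≤ k x ∧ 0 < m x ∧ a x = lam * k x * m x ^ 2) (hL0 : ∀ᵐ x ∂μ, 0 ≤ L x)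
    (hcost : ∫⁻ x, ENNReal.ofReal (k x * L x) ∂μ ≤ ∫⁻ x, ENNReal.ofReal (k x * m x) ∂μ)
    (hfin : ∫⁻ x, ENNReal.ofReal (k x * m x) ∂μ ≠ ⊤) :
    ∫⁻ x, ENNReal.ofReal (a x) / ENNReal.ofReal (m x) ∂μ
      ≤ ∫⁻ x, ENNReal.ofReal (a x) / ENNReal.ofReal (L x) ∂μ := by
  set C := ∫⁻ x, ENNReal.ofReal (k x * m x) ∂μ
  have hvalue : ∫⁻ x, ENNReal.ofReal (a x) / ENNReal.ofReal (m x) ∂μ = ENNReal.ofReal lam * C := by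
    rw [← lintegral_const_mul' _ _ ENNReal.ofReal_ne_top]
    refine lintegral_congr_ae (hm.mono fun x ⟨_, hmx, hax⟩ => ?_)
    dsimp only
    rw [← ENNReal.ofReal_div_of_pos hmx, ← ENNReal.ofReal_mul hlam, hax]
    congr 1
    field_simp
  refine ENNReal.le_of_add_le_add_right
    (ENNReal.mul_ne_top (ENNReal.ofReal_ne_top (r := lam)) hfin) ?_
  calc ∫⁻ x, ENNReal.ofReal (a x) / ENNReal.ofReal (m x) ∂μ + ENNReal.ofReal lam * C
      = ∫⁻ x, 2 * (ENNReal.ofReal (a x) / ENNReal.ofReal (m x)) ∂μ := by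
        rw [lintegral_const_mul' _ _ ENNReal.ofNat_ne_top, two_mul, hvalue]
    _ ≤ ∫⁻ x, ENNReal.ofReal (a x) / ENNReal.ofReal (L x)
          + ENNReal.ofReal lam * ENNReal.ofReal (k x * L x) ∂μ :=
        lintegral_mono_ae <| (hm.and hL0).mono fun x ⟨⟨hkx, hmx, hax⟩, hLx⟩ =>
          two_mul_ofReal_div_le hlam hkx hmx hLx hax
    _ = ∫⁻ x, ENNReal.ofReal (a x) / ENNReal.ofReal (L x) ∂μ
          + ENNReal.ofReal lam * ∫⁻ x, ENNReal.ofReal (k x * L x) ∂μ := by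
        rw [lintegral_add_right' _ (by fun_prop),
          lintegral_const_mul' _ _ ENNReal.ofReal_ne_top]
    _ ≤ _ := by gcongr

theorem isOptimal_rpow {PX PY B β c : ℝ} (hPX : 0 < PX) (hPY : 0 < PY) (hβ0 : 0 < β)
    (hβ1 : β < 1) (hc : 0 < c)
    (hB : PX * (c * ((PX / PY) ^ (β - 1) / (1 - β))) + PY * (c * ((PX / PY) ^ β / β)) = B) :
    IsOptimal PX PY B
      (fun q => if q.1 ∈ Ioc 0 PX ∧ q.2 ∈ Ioc 0 PY then (q.1 / q.2) ^ (2 * β - 1) else 0)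
      (fun p => c * p ^ β) (c * ((PX / PY) ^ (β - 1) / (1 - β))) (c * ((PX / PY) ^ β / β)) := by
  have hp₀ : 0 < PX / PY := div_pos hPX hPY
  have h1β : 0 < 1 - β := by linarith
  have hY := lintegral_Ioc_mul_rpow_div hc.le hβ0 hp₀
  have hX := lintegral_Ioi_mul_rpow_div_sq hc.le hβ1 hp₀
  have hfeas : Feasible PX PY B (fun p => c * p ^ β)
      (c * ((PX / PY) ^ (β - 1) / (1 - β))) (c * ((PX / PY) ^ β / β)) :=
    ⟨by fun_prop, fun p hp => mul_nonneg hc.le (Real.rpow_nonneg (le_of_lt hp) β),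
      by positivity, by positivity, hY.le, hX.le, hB.le⟩
  have hcost : ∫⁻ p in Ioi 0, ENNReal.ofReal (min PY (PX / p) / p * (c * p ^ β))
      = ENNReal.ofReal B := by
    rw [lintegral_Ioi_min_div_mul hPX hPY, hY, hX, ← ENNReal.ofReal_mul hPY.le,
      ← ENNReal.ofReal_mul hPX.le, ← ENNReal.ofReal_add (by positivity) (by positivity), ← hB,
      add_comm]
  have hstationary : ∀ p ∈ Ioi (0 : ℝ), 0 ≤ min PY (PX / p) / p ∧ 0 < c * p ^ β ∧
      min PY (PX / p) * p ^ (2 * β - 1) = (c ^ 2)⁻¹ * (min PY (PX / p) / p) * (c * p ^ β) ^ 2 :=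
    fun p (hp : 0 < p) => ⟨by positivity, by positivity, by
      rw [Real.rpow_sub_one hp.ne', mul_comm 2 β, Real.rpow_mul hp.le, Real.rpow_two]
      field_simp⟩
  refine ⟨hfeas, fun L' X0' Y0' hL' => ?_⟩
  have hg : Measurable fun p : ℝ => p ^ (2 * β - 1) := by fun_prop
  rw [ineff_eq_lintegral hPX.le hPY.le hg hfeas.1, ineff_eq_lintegral hPX.le hPY.le hg hL'.1]
  refine lintegral_div_le_of_cost_le (by positivity) (by fun_prop) hL'.1.aemeasurable
    (ae_restrict_of_forall_mem measurableSet_Ioi hstationary)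
    (ae_restrict_of_forall_mem measurableSet_Ioi hL'.2.1) ?_ (hcost ▸ ENNReal.ofReal_ne_top)
  rw [hcost]
  exact hL'.lintegral_cost_le hPX hPY

theorem stmt_14 (PX PY B α : ℝ) (hPX : 0 < PX) (hPY : 0 < PY) (hB : 0 < B)
    (hα : 0 < α)
    (ψ : ℝ × ℝ → ℝ)
    (hψ : ψ = fun q => if q.1 ∈ Set.Ioc (0:ℝ) PX ∧ q.2 ∈ Set.Ioc (0:ℝ) PY
        then (q.1 / q.2) ^ ((α - 1) / (α + 1)) else 0) :
    ∃ c > (0:ℝ), ∃ X0 Y0 : ℝ,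
      Y0 = c * ((α + 1) / α) * (PX / PY) ^ (α / (α + 1)) ∧
      X0 = c * (α + 1) * (PX / PY) ^ (-(1 : ℝ) / (α + 1)) ∧
      (∫⁻ p in Set.Ioc (0:ℝ) (PX / PY),
          ENNReal.ofReal ((c * p ^ (α / (α + 1))) / p)) = ENNReal.ofReal Y0 ∧
      (∫⁻ p in Set.Ioi (PX / PY),
          ENNReal.ofReal ((c * p ^ (α / (α + 1))) / p ^ 2)) = ENNReal.ofReal X0 ∧
      PX * X0 + PY * Y0 = B ∧
      Feasible PX PY B (fun p => c * p ^ (α / (α + 1))) X0 Y0 ∧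
      ∀ L' X0' Y0', Feasible PX PY B L' X0' Y0' →
        Ineff ψ (fun p => c * p ^ (α / (α + 1))) ≤ Ineff ψ L' := by
  have hα1 : 0 < α + 1 := by linarith
  have hγ : (α - 1) / (α + 1) = 2 * (α / (α + 1)) - 1 := by field_simp; ring
  have hβ_sub : α / (α + 1) - 1 = -1 / (α + 1) := by field_simp; ring
  have h1β : 1 - α / (α + 1) = 1 / (α + 1) := by field_simp; ring
  have hβ_inv : 1 / (α / (α + 1)) = (α + 1) / α := by field_simp
  set β := α / (α + 1)
  have hβ0 : 0 < β := by positivity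
  have hβ1 : β < 1 := (div_lt_one hα1).2 (by linarith)
  have hp₀ : 0 < PX / PY := div_pos hPX hPY
  set D := PX * ((PX / PY) ^ (β - 1) / (1 - β)) + PY * ((PX / PY) ^ β / β) with hD_def
  have hD : 0 < D := by
    have : 0 < 1 - β := by linarith
    positivity
  have hbudget : PX * (B / D * ((PX / PY) ^ (β - 1) / (1 - β)))
      + PY * (B / D * ((PX / PY) ^ β / β)) = B := by
    rw [mul_left_comm PX, mul_left_comm PY, ← mul_add, ← hD_def, div_mul_cancel₀ B hD.ne']
  refine ⟨B / D, by positivity, _, _, by rw [← hβ_inv]; ring, by rw [hβ_sub, h1β]; field_simp,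
    lintegral_Ioc_mul_rpow_div (by positivity) hβ0 hp₀,
    lintegral_Ioi_mul_rpow_div_sq (by positivity) hβ1 hp₀, hbudget, ?_⟩
  subst hψ
  rw [hγ]
  exact isOptimal_rpow hPX hPY hβ0 hβ1 (by positivity) hbudget
end
end
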